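/- arXiv:math/9906066 — 7 statements merged into one kernel-verified Lean document; each statement's English description precedes it below -/
import Mathlib

section
/- Let P ⊂ ℝⁿ be a box (rectangular parallelepiped) with nondegenerate edges, and let E ⊂ ℝⁿ be an ellipsoid circumscribed about P, i.e. the boundary ∂E contains all 2ⁿ vertices of P. Then the centre of E coincides with the centre of P, and E has a system of n pairwise orthogonal axes parallel to the edges of P. -/
noncomputable section

open Matrix

/-- The value of the quadratic form with (symmetric) matrix `Q` at `y`. -/
def qform (n : ℕ) (Q : Matrix (Fin n) (Fin n) ℝ) (y : Fin n → ℝ) : ℝ :=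
  ∑ i, y i * Q.mulVec y i

/-- Let `P ⊆ ℝⁿ` be a box with centre `p`, orthonormal edge directions
`u 0, …, u (n-1)` and positive half edge lengths `d i` (so its vertices are
`p + ∑ i, (± d i) • u i`), and let `E` be an ellipsoid, with centre `c` and positive definite
quadratic form given by the symmetric matrix `Q`, whose boundary `{x | q(x - c) = 1}` contains
all `2ⁿ` vertices of `P`.  Then `c = p` and `E` has a system of `n` axes parallel to the edges
of `P`, i.e. each `u i` is an eigendirection of `Q`. -/
theorem ellipsoid_circumscribed_box
    (n : ℕ) (Q : Matrix (Fin n) (Fin n) ℝ) (c : Fin n → ℝ)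
    (hQsym : Q.transpose = Q)
    (hQpos : ∀ x : Fin n → ℝ, x ≠ 0 → 0 < qform n Q x)
    (p : Fin n → ℝ) (u : Fin n → Fin n → ℝ)
    (hu : ∀ i j, ∑ k, u i k * u j k = if i = j then (1 : ℝ) else 0)
    (d : Fin n → ℝ) (hd : ∀ i, 0 < d i)
    (hvert : ∀ ε : Fin n → ℝ, (∀ i, ε i = 1 ∨ ε i = -1) →
      qform n Q ((fun m => p m + ∑ i, ε i * d i * u i m) - c) = 1) :
    c = p ∧ ∀ i, ∃ μ : ℝ, Q.mulVec (u i) = μ • u i := by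
  classical
  set B : (Fin n → ℝ) → (Fin n → ℝ) → ℝ := fun x y => x ⬝ᵥ Q.mulVec y with hBdef
  have hBsymm : ∀ x y, B x y = B y x := by
    intro x y
    simp only [hBdef]
    nth_rewrite 1 [← hQsym]
    rw [Matrix.mulVec_transpose, dotProduct_comm, ← Matrix.dotProduct_mulVec]
  have hBsum : ∀ (x : Fin n → ℝ) (f : Fin n → Fin n → ℝ),
      B x (∑ j, f j) = ∑ j, B x (f j) := by
    intro x f
    simp only [hBdef]
    have h1 : Q.mulVec (∑ j, f j) = ∑ j, Q.mulVec (f j) := by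
      simp only [← Matrix.mulVecLin_apply, map_sum]
    rw [h1]
    simp only [dotProduct, Finset.sum_apply, Finset.mul_sum]
    exact Finset.sum_comm
  have hBsmul_r : ∀ (a : ℝ) (x y : Fin n → ℝ), B x (a • y) = a * B x y := by
    intro a x y
    simp [hBdef, Matrix.mulVec_smul, dotProduct_smul, smul_eq_mul]
  have hBadd_r : ∀ x y z : Fin n → ℝ, B x (y + z) = B x y + B x z := by
    intro x y z
    simp [hBdef, Matrix.mulVec_add, dotProduct_add]
  have hBsmul_l : ∀ (a : ℝ) (x y : Fin n → ℝ), B (a • x) y = a * B x y := by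
    intro a x y
    simp [hBdef, smul_dotProduct, smul_eq_mul]
  have hBadd_l : ∀ x y z : Fin n → ℝ, B (x + y) z = B x z + B y z := by
    intro x y z
    simp [hBdef, add_dotProduct]
  have hBsub_l : ∀ x y z : Fin n → ℝ, B (x - y) z = B x z - B y z := by
    intro x y z
    simp [hBdef, sub_dotProduct]
  have hBsum2 : ∀ (x : Fin n → ℝ) (g : Fin n → ℝ) (f : Fin n → Fin n → ℝ),
      B x (∑ j, g j • f j) = ∑ j, g j * B x (f j) := by
    intro x g f
    rw [hBsum]
    exact Finset.sum_congr rfl fun j _ => hBsmul_r _ _ _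
  set w : Fin n → ℝ := p - c with hwdef
  set s : (Fin n → ℝ) → (Fin n → ℝ) := fun ε => ∑ j, (ε j * d j) • u j with hsdef
  have hv : ∀ ε : Fin n → ℝ, (∀ i, ε i = 1 ∨ ε i = -1) →
      B (w + s ε) (w + s ε) = 1 := by
    intro ε hε
    have hvec : (fun m => p m + ∑ i, ε i * d i * u i m) - c = w + s ε := by
      funext m
      simp only [hsdef, hwdef, Pi.sub_apply, Pi.add_apply, Finset.sum_apply,
        Pi.smul_apply, smul_eq_mul]
      ring
    have h := hvert ε hε
    rw [hvec] at h
    exact h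
  -- polarization
  have hpol : ∀ x y : Fin n → ℝ, B x x - B y y = B (x - y) (x + y) := by
    intro x y
    rw [hBsub_l, hBadd_r, hBadd_r, hBsymm y x]
    ring
  -- key Lemma A
  have lemA : ∀ (ε : Fin n → ℝ), (∀ i, ε i = 1 ∨ ε i = -1) → ∀ i,
      B (u i) w + ∑ j ∈ Finset.univ.erase i, ε j * d j * B (u i) (u j) = 0 := by
    intro ε hε i
    set ε' : Fin n → ℝ := Function.update ε i (-(ε i)) with hε'def
    have hε'i : ε' i = -(ε i) := by simp [hε'def]
    have hε'j : ∀ j, j ≠ i → ε' j = ε j := by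
      intro j hj; simp [hε'def, hj]
    have hε' : ∀ j, ε' j = 1 ∨ ε' j = -1 := by
      intro j
      by_cases hj : j = i
      · subst hj
        rw [hε'i]
        rcases hε j with h | h
        · right; rw [h]
        · left; rw [h]; ring
      · rw [hε'j j hj]; exact hε j
    have hεne : ε i ≠ 0 := by
      rcases hε i with h | h <;> rw [h] <;> norm_num
    have hdiff : B (w + s ε) (w + s ε) - B (w + s ε') (w + s ε') = 0 := by
      rw [hv ε hε, hv ε' hε']; ring
    rw [hpol] at hdiff
    have hsub : (w + s ε) - (w + s ε') = (2 * ε i * d i) • u i := by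
      have h1 : s ε - s ε' = ∑ j, ((ε j - ε' j) * d j) • u j := by
        rw [hsdef]
        simp only
        rw [← Finset.sum_sub_distrib]
        exact Finset.sum_congr rfl fun j _ => by rw [← sub_smul, ← sub_mul]
      have h2 : (∑ j, ((ε j - ε' j) * d j) • u j) = (2 * ε i * d i) • u i := by
        rw [Finset.sum_eq_single i]
        · rw [hε'i]; ring_nf
        · intro j _ hj
          rw [hε'j j hj]
          simp
        · intro h; exact absurd (Finset.mem_univ i) h
      calc (w + s ε) - (w + s ε') = s ε - s ε' := by abel
        _ = (2 * ε i * d i) • u i := by rw [h1, h2]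
    have hadd : (w + s ε) + (w + s ε') = (2:ℝ) • w + ∑ j, ((ε j + ε' j) * d j) • u j := by
      have h1 : s ε + s ε' = ∑ j, ((ε j + ε' j) * d j) • u j := by
        rw [hsdef]
        simp only
        rw [← Finset.sum_add_distrib]
        exact Finset.sum_congr rfl fun j _ => by rw [← add_smul, ← add_mul]
      rw [← h1]
      have : (2:ℝ) • w = w + w := two_smul ℝ w
      rw [this]; abel
    rw [hsub, hadd, hBsmul_l, hBadd_r, hBsmul_r, hBsum2] at hdiff
    have hsplit : (∑ j, (ε j + ε' j) * d j * B (u i) (u j))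
        = 2 * ∑ j ∈ Finset.univ.erase i, ε j * d j * B (u i) (u j) := by
      rw [← Finset.add_sum_erase _ _ (Finset.mem_univ i), hε'i]
      have hz : (ε i + -ε i) * d i * B (u i) (u i) = 0 := by ring
      rw [hz, zero_add, Finset.mul_sum]
      refine Finset.sum_congr rfl fun j hj => ?_
      rw [hε'j j (Finset.ne_of_mem_erase hj)]
      ring
    rw [hsplit] at hdiff
    have hfac : (2 * ε i * d i) *
        ((2:ℝ) * (B (u i) w + ∑ j ∈ Finset.univ.erase i, ε j * d j * B (u i) (u j))) = 0 := by
      rw [← hdiff]; ring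
    have hne : (2 * ε i * d i) ≠ 0 :=
      mul_ne_zero (mul_ne_zero two_ne_zero hεne) (ne_of_gt (hd i))
    have h2 := (mul_eq_zero.mp hfac).resolve_left hne
    exact (mul_eq_zero.mp h2).resolve_left (two_ne_zero)
  -- the all-ones sign vector
  have hone : ∀ i : Fin n, (fun _ : Fin n => (1:ℝ)) i = 1 ∨ (fun _ : Fin n => (1:ℝ)) i = -1 :=
    fun _ => Or.inl rfl
  -- orthogonality of u_i, u_j under B
  have hBij : ∀ i j, i ≠ j → B (u i) (u j) = 0 := by
    intro i j hij
    set ε2 : Fin n → ℝ := Function.update (fun _ => (1:ℝ)) j (-1) with hε2def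
    have hε2j : ε2 j = -1 := by simp [hε2def]
    have hε2k : ∀ k, k ≠ j → ε2 k = 1 := by intro k hk; simp [hε2def, hk]
    have hε2 : ∀ k, ε2 k = 1 ∨ ε2 k = -1 := by
      intro k
      by_cases hk : k = j
      · subst hk; right; exact hε2j
      · left; exact hε2k k hk
    have hA1 := lemA (fun _ => (1:ℝ)) hone i
    have hA2 := lemA ε2 hε2 i
    have hjmem : j ∈ Finset.univ.erase i := Finset.mem_erase.mpr ⟨(Ne.symm hij), Finset.mem_univ j⟩
    have hs : (∑ k ∈ Finset.univ.erase i, (1:ℝ) * d k * B (u i) (u k))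
        - (∑ k ∈ Finset.univ.erase i, ε2 k * d k * B (u i) (u k))
        = 2 * d j * B (u i) (u j) := by
      rw [← Finset.sum_sub_distrib]
      rw [Finset.sum_eq_single j]
      · rw [hε2j]; ring
      · intro k _ hk
        rw [hε2k k hk]; ring
      · intro h; exact absurd hjmem h
    have h0 : 2 * d j * B (u i) (u j) = 0 := by
      rw [← hs]
      have e1 : (∑ k ∈ Finset.univ.erase i, (1:ℝ) * d k * B (u i) (u k)) = - B (u i) w := by
        linarith [hA1]
      have e2 : (∑ k ∈ Finset.univ.erase i, ε2 k * d k * B (u i) (u k)) = - B (u i) w := by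
        linarith [hA2]
      rw [e1, e2]; ring
    have hne : (2 * d j) ≠ 0 := mul_ne_zero two_ne_zero (ne_of_gt (hd j))
    have := (mul_eq_zero.mp h0).resolve_left hne
    exact this
  -- B (u i) w = 0
  have hBw : ∀ i, B (u i) w = 0 := by
    intro i
    have hA1 := lemA (fun _ => (1:ℝ)) hone i
    have hz : (∑ j ∈ Finset.univ.erase i, (1:ℝ) * d j * B (u i) (u j)) = 0 := by
      refine Finset.sum_eq_zero fun j hj => ?_
      rw [hBij i j (Ne.symm (Finset.ne_of_mem_erase hj))]
      ring
    rw [hz, add_zero] at hA1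
    exact hA1
  -- the orthogonal matrix with rows u i
  set U : Matrix (Fin n) (Fin n) ℝ := Matrix.of u with hUdef
  have hUU : U * Uᵀ = 1 := by
    ext i j
    rw [Matrix.mul_apply, Matrix.one_apply]
    simpa [hUdef] using hu i j
  have hUU2 : Uᵀ * U = 1 := mul_eq_one_comm.mp hUU
  have hinj : Function.Injective U.mulVec := by
    intro x y hxy
    have h := congrArg (Uᵀ.mulVec) hxy
    rwa [Matrix.mulVec_mulVec, Matrix.mulVec_mulVec, hUU2, Matrix.one_mulVec,
      Matrix.one_mulVec] at h
  -- c = p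
  have hQw : Q.mulVec w = 0 := by
    apply hinj
    have h1 : U.mulVec (Q.mulVec w) = 0 := by
      funext i
      exact hBw i
    rw [h1, Matrix.mulVec_zero]
  have hw0 : w = 0 := by
    by_contra h
    have hp := hQpos w h
    have : qform n Q w = 0 := by
      simp [qform, hQw]
    rw [this] at hp
    exact lt_irrefl 0 hp
  have hcp : c = p := by
    have : p - c = 0 := hw0
    have := sub_eq_zero.mp this
    exact this.symm
  refine ⟨hcp, fun i => ⟨B (u i) (u i), ?_⟩⟩
  apply hinj
  funext j
  have lhs : U.mulVec (Q.mulVec (u i)) j = B (u j) (u i) := rfl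
  have rhs : U.mulVec ((B (u i) (u i)) • u i) j
      = B (u i) (u i) * (if j = i then 1 else 0) := by
    rw [Matrix.mulVec_smul]
    have : U.mulVec (u i) j = if j = i then 1 else 0 := by
      rw [← hu j i]
      rfl
    rw [Pi.smul_apply, this, smul_eq_mul]
  rw [lhs, rhs]
  by_cases hji : j = i
  · subst hji; simp
  · rw [if_neg hji, mul_zero, hBij j i hji]
end
end

section
/- Let E ⊂ ℝⁿ be an ellipsoid whose n axis lengths are pairwise different, and let B ⊂ ℝⁿ be a box of size a₁ × ⋯ × aₙ, where a₁ = ⋯ = a_{n₁} < a_{n₁+1} = ⋯ = a_{n₁+n₂} < ⋯ < a_{n₁+⋯+n_{k−1}+1} = ⋯ = aₙ and n = n₁ + ⋯ + n_k. Then the number of similar copies B′ of B inscribed in E (i.e. boxes similar to B all of whose vertices lie on ∂E) is exactly n!/(n₁!⋯n_k!), and in each case the centre of B′ coincides with the centre of E. -/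
noncomputable section

/-- A family of `n` orthonormal vectors in `ℝⁿ`. -/
def OrthonormalVecs (n : ℕ) (u : Fin n → Fin n → ℝ) : Prop :=
  ∀ i j, ∑ k, u i k * u j k = if i = j then (1 : ℝ) else 0

namespace EBox
open Matrix

variable {n : ℕ} {Q : Matrix (Fin n) (Fin n) ℝ}

/-- bilinear form -/
def B (Q : Matrix (Fin n) (Fin n) ℝ) (x z : Fin n → ℝ) : ℝ := x ⬝ᵥ Q.mulVec z

lemma qform_eq (y : Fin n → ℝ) : qform n Q y = B Q y y := rfl

lemma B_symm (hQsym : Q.transpose = Q) (x z : Fin n → ℝ) : B Q x z = B Q z x := by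
  unfold B
  rw [Matrix.dotProduct_mulVec, ← Matrix.mulVec_transpose, hQsym, dotProduct_comm]

lemma B_add_left (x y z : Fin n → ℝ) : B Q (x + y) z = B Q x z + B Q y z := by
  simp [B, add_dotProduct]

lemma B_sum_left (s : Finset (Fin n)) (f : Fin n → Fin n → ℝ) (z : Fin n → ℝ) :
    B Q (∑ i ∈ s, f i) z = ∑ i ∈ s, B Q (f i) z := by
  classical
  induction s using Finset.induction with
  | empty => simp [B, zero_dotProduct]
  | insert _ _ h ih => simp [Finset.sum_insert h, B_add_left, ih]

lemma B_smul_left (t : ℝ) (x z : Fin n → ℝ) : B Q (t • x) z = t * B Q x z := by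
  simp [B, smul_dotProduct]

lemma B_add_right (x y z : Fin n → ℝ) : B Q x (y + z) = B Q x y + B Q x z := by
  simp [B, Matrix.mulVec_add, dotProduct_add]

lemma B_sum_right (s : Finset (Fin n)) (x : Fin n → ℝ) (f : Fin n → Fin n → ℝ) :
    B Q x (∑ i ∈ s, f i) = ∑ i ∈ s, B Q x (f i) := by
  classical
  induction s using Finset.induction with
  | empty => simp [B, Matrix.mulVec_zero]
  | insert _ _ h ih => simp [Finset.sum_insert h, B_add_right, ih]

lemma B_smul_right (t : ℝ) (x z : Fin n → ℝ) : B Q x (t • z) = t * B Q x z := by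
  simp [B, Matrix.mulVec_smul, dotProduct_smul]

lemma fun_sum_eq (y : Fin n → ℝ) (d : Fin n → ℝ) (v : Fin n → Fin n → ℝ) :
    (fun m => y m + ∑ i, d i * v i m) = y + ∑ i, d i • v i := by
  funext m
  simp [Finset.sum_apply]

/-- Key expansion of the quadratic form at a vertex. -/
lemma expand (y : Fin n → ℝ) (d : Fin n → ℝ) (v : Fin n → Fin n → ℝ) :
    qform n Q (fun m => y m + ∑ i, d i * v i m)
      = B Q y y + ∑ i, d i * (B Q y (v i)) + ∑ i, d i * (B Q (v i) y)
        + ∑ i, ∑ j, (d i * d j) * B Q (v i) (v j) := by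
  rw [qform_eq, fun_sum_eq, B_add_left, B_add_right, B_add_right, B_sum_left, B_sum_right,
    B_sum_left]
  have h1 : ∀ i, B Q y (d i • v i) = d i * B Q y (v i) := fun i => B_smul_right _ _ _
  have h2 : ∀ i, B Q (d i • v i) y = d i * B Q (v i) y := fun i => B_smul_left _ _ _
  have h3 : ∀ i, B Q (d i • v i) (∑ j, d j • v j) = ∑ j, (d i * d j) * B Q (v i) (v j) := by
    intro i
    rw [B_smul_left, B_sum_right, Finset.mul_sum]
    exact Finset.sum_congr rfl fun j _ => by rw [B_smul_right]; ring
  simp only [h1, h2, h3]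
  ring

end EBox

namespace EBox2
open Matrix EBox

variable {n : ℕ} {Q : Matrix (Fin n) (Fin n) ℝ}

/-- A vector orthogonal to an orthonormal family of n vectors in ℝⁿ is zero. -/
lemma perp_eq_zero {u : Fin n → Fin n → ℝ} (hu : OrthonormalVecs n u)
    (v : Fin n → ℝ) (hv : ∀ i, ∑ k, u i k * v k = 0) : v = 0 := by
  classical
  set U : Matrix (Fin n) (Fin n) ℝ := Matrix.of u with hU
  have hUUt : U * U.transpose = 1 := by
    ext i j
    simpa [Matrix.mul_apply, Matrix.one_apply, U] using hu i j
  have hUtU : U.transpose * U = 1 := mul_eq_one_comm.mp hUUt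
  have hmv : U.mulVec v = 0 := by
    funext i
    simpa [Matrix.mulVec, dotProduct, U] using hv i
  calc v = (U.transpose * U).mulVec v := by rw [hUtU, Matrix.one_mulVec]
    _ = U.transpose.mulVec (U.mulVec v) := by rw [Matrix.mulVec_mulVec]
    _ = 0 := by rw [hmv, Matrix.mulVec_zero]

/-- Expansion of a vector in an orthonormal basis. -/
lemma expand_basis {w : Fin n → Fin n → ℝ} (hw : OrthonormalVecs n w) (v : Fin n → ℝ) :
    v = ∑ j, (∑ m, v m * w j m) • w j := by
  classical
  have h : v - ∑ j, (∑ m, v m * w j m) • w j = 0 := by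
    apply perp_eq_zero hw
    intro i
    have hk : ∀ k, (v - ∑ j, (∑ m, v m * w j m) • w j) k
        = v k - ∑ j, (∑ m, v m * w j m) * w j k := by
      intro k; simp [Finset.sum_apply]
    simp only [hk, mul_sub, Finset.sum_sub_distrib]
    have h2 : ∑ k, w i k * ∑ j, (∑ m, v m * w j m) * w j k
        = ∑ j, (∑ m, v m * w j m) * ∑ k, w i k * w j k := by
      simp only [Finset.mul_sum]
      rw [Finset.sum_comm]
      apply Finset.sum_congr rfl
      intro j _
      exact Finset.sum_congr rfl fun k _ => by ring
    rw [h2]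
    have h3 : ∑ j, (∑ m, v m * w j m) * ∑ k, w i k * w j k = ∑ m, v m * w i m := by
      rw [Finset.sum_eq_single i]
      · rw [hw i i]; simp
      · intro j _ hj; rw [hw i j, if_neg (Ne.symm hj)]; simp
      · intro hi; exact absurd (Finset.mem_univ i) hi
    rw [h3]
    have h4 : ∑ k, w i k * v k = ∑ m, v m * w i m :=
      Finset.sum_congr rfl fun k _ => mul_comm _ _
    rw [h4, sub_self]
  exact sub_eq_zero.mp h

variable (n) in
def epsTwo (i j : Fin n) (s t : ℝ) : Fin n → ℝ := fun k => if k = i then s else if k = j then t else 1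

lemma epsTwo_sign {i j : Fin n} {s t : ℝ} (hs : s = 1 ∨ s = -1) (ht : t = 1 ∨ t = -1) :
    ∀ k, epsTwo n i j s t k = 1 ∨ epsTwo n i j s t k = -1 := by
  intro k
  unfold epsTwo
  split_ifs
  · exact hs
  · exact ht
  · exact Or.inl rfl

lemma dd1 (m : Fin n → Fin n → ℝ) (c : ℝ) (i j : Fin n) :
    ∑ k, ∑ l, (if k = i ∧ l = j then c else 0) * m k l = c * m i j := by
  rw [Finset.sum_eq_single i]
  · rw [Finset.sum_eq_single j]
    · simp
    · intro l _ hl; simp [hl]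
    · simp
  · intro k _ hk
    exact Finset.sum_eq_zero fun l _ => by simp [hk]
  · simp

/-- Cross terms vanish: from the vertex equations, off-diagonal coefficients cancel. -/
lemma signs_cross (c : Fin n → ℝ) (m : Fin n → Fin n → ℝ) (K : ℝ)
    (hG : ∀ ε : Fin n → ℝ, (∀ i, ε i = 1 ∨ ε i = -1) →
      ∑ k, ε k * c k + ∑ k, ∑ l, (ε k * ε l) * m k l = K)
    (i j : Fin n) (hij : i ≠ j) : m i j + m j i = 0 := by
  have h1 := hG _ (epsTwo_sign (i := i) (j := j) (Or.inl rfl) (Or.inl rfl))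
  have h2 := hG _ (epsTwo_sign (i := i) (j := j) (Or.inr rfl) (Or.inr rfl))
  have h3 := hG _ (epsTwo_sign (i := i) (j := j) (Or.inl rfl) (Or.inr rfl))
  have h4 := hG _ (epsTwo_sign (i := i) (j := j) (Or.inr rfl) (Or.inl rfl))
  have hS : ∑ k, (epsTwo n i j 1 1 k * c k + epsTwo n i j (-1) (-1) k * c k
      - epsTwo n i j 1 (-1) k * c k - epsTwo n i j (-1) 1 k * c k) = 0 :=
    Finset.sum_eq_zero (fun k _ => by unfold epsTwo; split_ifs <;> ring)
  have hT : ∑ k, ∑ l, ((epsTwo n i j 1 1 k * epsTwo n i j 1 1 l) * m k l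
      + (epsTwo n i j (-1) (-1) k * epsTwo n i j (-1) (-1) l) * m k l
      - (epsTwo n i j 1 (-1) k * epsTwo n i j 1 (-1) l) * m k l
      - (epsTwo n i j (-1) 1 k * epsTwo n i j (-1) 1 l) * m k l)
      = 4 * m i j + 4 * m j i := by
    have hpt : ∀ k l, ((epsTwo n i j 1 1 k * epsTwo n i j 1 1 l) * m k l
      + (epsTwo n i j (-1) (-1) k * epsTwo n i j (-1) (-1) l) * m k l
      - (epsTwo n i j 1 (-1) k * epsTwo n i j 1 (-1) l) * m k l
      - (epsTwo n i j (-1) 1 k * epsTwo n i j (-1) 1 l) * m k l)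
        = (if k = i ∧ l = j then (4:ℝ) else 0) * m k l
          + (if k = j ∧ l = i then (4:ℝ) else 0) * m k l := by
      intro k l
      unfold epsTwo
      by_cases hki : k = i <;> by_cases hkj : k = j <;>
        by_cases hli : l = i <;> by_cases hlj : l = j <;>
        simp_all <;> ring
    simp only [hpt, Finset.sum_add_distrib, dd1]
  simp only [Finset.sum_add_distrib, Finset.sum_sub_distrib] at hS hT
  linarith


/-- Linear terms vanish once cross terms are known to vanish. -/
lemma signs_linear (c : Fin n → ℝ) (m : Fin n → Fin n → ℝ) (K : ℝ)
    (hG : ∀ ε : Fin n → ℝ, (∀ i, ε i = 1 ∨ ε i = -1) →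
      ∑ k, ε k * c k + ∑ k, ∑ l, (ε k * ε l) * m k l = K)
    (hoff : ∀ k l, k ≠ l → m k l = 0)
    (i : Fin n) : c i = 0 := by
  have hquad : ∀ ε : Fin n → ℝ, (∀ i, ε i = 1 ∨ ε i = -1) →
      ∑ k, ∑ l, (ε k * ε l) * m k l = ∑ k, m k k := by
    intro ε hε
    apply Finset.sum_congr rfl
    intro k _
    rw [Finset.sum_eq_single k]
    · rcases hε k with h | h <;> rw [h] <;> ring
    · intro l _ hl; rw [hoff k l (Ne.symm hl)]; ring
    · simp
  have h1 := hG (fun _ => 1) (fun _ => Or.inl rfl)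
  have h2 := hG (fun k => if k = i then -1 else 1)
    (fun k => by by_cases h : k = i <;> simp [h])
  rw [hquad _ (fun _ => Or.inl rfl)] at h1
  rw [hquad _ (fun k => by by_cases h : k = i <;> simp [h])] at h2
  have hdiff : ∑ k, ((1 : ℝ) * c k - (if k = i then (-1:ℝ) else 1) * c k) = 2 * c i := by
    have hpt : ∀ k, ((1 : ℝ) * c k - (if k = i then (-1:ℝ) else 1) * c k)
        = if k = i then 2 * c k else 0 := by
      intro k; split_ifs <;> ring
    simp only [hpt]
    rw [Finset.sum_ite_eq' Finset.univ i (fun k => 2 * c k)]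
    simp
  rw [Finset.sum_sub_distrib] at hdiff
  linarith

/-- Main structural lemma: vertices on the ellipsoid force centre `p = c` and
`B`-orthogonality of the directions. -/
lemma centre_and_orth {Q : Matrix (Fin n) (Fin n) ℝ} {p c : Fin n → ℝ}
    {u : Fin n → Fin n → ℝ} {r : ℝ} {a : Fin n → ℝ}
    (hQsym : Q.transpose = Q)
    (hQpos : ∀ x : Fin n → ℝ, x ≠ 0 → 0 < qform n Q x)
    (hu : OrthonormalVecs n u) (hr : 0 < r) (ha : ∀ i, 0 < a i)
    (hon : ∀ ε : Fin n → ℝ, (∀ i, ε i = 1 ∨ ε i = -1) →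
      qform n Q ((fun m => p m + ∑ i, ε i * (r * a i) * u i m) - c) = 1) :
    p = c ∧ ∀ i j, i ≠ j → B Q (u i) (u j) = 0 := by
  set y : Fin n → ℝ := p - c with hy
  set cc : Fin n → ℝ := fun k => (r * a k) * (B Q y (u k) + B Q (u k) y) with hcc
  set mm : Fin n → Fin n → ℝ :=
    fun k l => ((r * a k) * (r * a l)) * B Q (u k) (u l) with hmm
  have hsub : ∀ ε : Fin n → ℝ,
      ((fun m => p m + ∑ i, ε i * (r * a i) * u i m) - c)
        = fun m => y m + ∑ i, (ε i * (r * a i)) * u i m := by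
    intro ε; funext m; simp [hy]; ring
  have hG : ∀ ε : Fin n → ℝ, (∀ i, ε i = 1 ∨ ε i = -1) →
      ∑ k, ε k * cc k + ∑ k, ∑ l, (ε k * ε l) * mm k l = 1 - B Q y y := by
    intro ε hε
    have h := hon ε hε
    rw [hsub ε, expand] at h
    have e1 : ∑ k, ε k * cc k
        = ∑ i, (ε i * (r * a i)) * B Q y (u i) + ∑ i, (ε i * (r * a i)) * B Q (u i) y := by
      rw [← Finset.sum_add_distrib]
      exact Finset.sum_congr rfl fun k _ => by simp only [hcc]; ring
    have e2 : ∑ k, ∑ l, (ε k * ε l) * mm k l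
        = ∑ i, ∑ j, ((ε i * (r * a i)) * (ε j * (r * a j))) * B Q (u i) (u j) :=
      Finset.sum_congr rfl fun k _ => Finset.sum_congr rfl fun l _ => by
        simp only [hmm]; ring
    rw [e1, e2]; linarith
  have hsa : ∀ i, 0 < r * a i := fun i => mul_pos hr (ha i)
  have horth : ∀ i j, i ≠ j → B Q (u i) (u j) = 0 := by
    intro i j hij
    have h := signs_cross cc mm _ hG i j hij
    have hBsym := B_symm hQsym (u i) (u j)
    have : ((r * a i) * (r * a j)) * (2 * B Q (u i) (u j)) = 0 := by
      simp only [hmm] at h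
      rw [← hBsym] at h
      linear_combination h
    rcases mul_eq_zero.mp this with h' | h'
    · exact absurd h' (ne_of_gt (mul_pos (hsa i) (hsa j)))
    · linarith
  have hoff : ∀ k l, k ≠ l → mm k l = 0 := by
    intro k l hkl; simp only [hmm, horth k l hkl]; ring
  have hlin : ∀ i, B Q y (u i) = 0 := by
    intro i
    have h := signs_linear cc mm _ hG hoff i
    simp only [hcc, B_symm hQsym (u i) y] at h
    have : (r * a i) * (2 * B Q y (u i)) = 0 := by linarith
    rcases mul_eq_zero.mp this with h' | h'
    · exact absurd h' (ne_of_gt (hsa i))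
    · linarith
  have hQy : Q.mulVec y = 0 := by
    apply perp_eq_zero hu
    intro i
    have := hlin i
    rw [B_symm hQsym] at this
    simpa [B, dotProduct] using this
  have hy0 : y = 0 := by
    by_contra hne
    have := hQpos y hne
    rw [qform_eq] at this
    simp [B, hQy, dotProduct] at this
  exact ⟨sub_eq_zero.mp hy0, horth⟩

lemma sq_eq_one_cases {x : ℝ} (h : x * x = 1) : x = 1 ∨ x = -1 := by
  have : (x - 1) * (x + 1) = 0 := by ring_nf; linarith
  rcases mul_eq_zero.mp this with h' | h'
  · left; linarith
  · right; linarith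

/-- Directions that are orthonormal and `B`-orthogonal must be (up to sign) a permutation of
the eigenbasis, when eigenvalues are pairwise distinct. -/
lemma signed_perm {Q : Matrix (Fin n) (Fin n) ℝ} {w u : Fin n → Fin n → ℝ} {μ : Fin n → ℝ}
    (hw : OrthonormalVecs n w) (hμ : Function.Injective μ)
    (heig : ∀ i, Q.mulVec (w i) = μ i • w i) (hu : OrthonormalVecs n u)
    (horth : ∀ i j, i ≠ j → B Q (u i) (u j) = 0) :
    ∃ (σ : Equiv.Perm (Fin n)) (τ : Fin n → ℝ),
      (∀ i, τ i = 1 ∨ τ i = -1) ∧ ∀ i, u i = fun m => τ i * w (σ i) m := by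
  classical
  set C : Fin n → Fin n → ℝ := fun i j => ∑ m, u i m * w j m with hC
  have hexp : ∀ i, u i = ∑ j, C i j • w j := fun i => expand_basis hw (u i)
  have hBuw : ∀ i j, B Q (u i) (w j) = μ j * C i j := by
    intro i j
    simp only [B, heig j, hC]
    rw [dotProduct]
    simp only [Pi.smul_apply, smul_eq_mul]
    rw [Finset.mul_sum]
    exact Finset.sum_congr rfl fun m _ => by ring
  have hBC : ∀ i k, B Q (u i) (u k) = ∑ j, (μ j * C i j) * C k j := by
    intro i k
    conv_lhs => rw [hexp k]
    rw [B_sum_right]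
    exact Finset.sum_congr rfl fun j _ => by rw [B_smul_right, hBuw]; ring
  have hCC : OrthonormalVecs n C := by
    intro i k
    have h := hu i k
    conv_lhs at h => rw [hexp k]
    have h2 : ∑ m, u i m * (∑ j, C k j • w j) m = ∑ j, C i j * C k j := by
      have hm : ∀ m, u i m * (∑ j, C k j • w j) m = ∑ j, C k j * (u i m * w j m) := by
        intro m
        rw [Finset.sum_apply, Finset.mul_sum]
        exact Finset.sum_congr rfl fun j _ => by simp [smul_eq_mul]; ring
      simp only [hm]
      rw [Finset.sum_comm]
      exact Finset.sum_congr rfl fun j _ => by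
        rw [← Finset.mul_sum, hC]; ring
    rw [h2] at h
    exact h
  -- each row of C is an eigenvector of the diagonal matrix diag μ
  have hrow : ∀ i j, μ j * C i j = B Q (u i) (u i) * C i j := by
    intro i j
    have hv := expand_basis hCC (fun j => μ j * C i j)
    have hcoef : ∀ k, (∑ m, (μ m * C i m) * C k m) = if k = i then B Q (u i) (u i) else 0 := by
      intro k
      rcases eq_or_ne k i with rfl | hk
      · rw [if_pos rfl, hBC]
      · rw [if_neg hk, ← hBC, horth i k (Ne.symm hk)]
    have : (fun j => μ j * C i j) = (B Q (u i) (u i)) • C i := by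
      rw [hv]
      rw [Finset.sum_eq_single i]
      · rw [hcoef i, if_pos rfl]
      · intro k _ hk
        rw [hcoef k, if_neg hk, zero_smul]
      · simp
    have := congrFun this j
    simpa [smul_eq_mul] using this
  -- the support of each row is a single index
  have hone : ∀ i, ∑ j, C i j * C i j = 1 := by
    intro i; rw [hCC i i, if_pos rfl]
  have hex : ∀ i, ∃ j, C i j ≠ 0 := by
    intro i
    by_contra hno
    push_neg at hno
    have : ∑ j, C i j * C i j = 0 :=
      Finset.sum_eq_zero fun j _ => by rw [hno j]; ring
    rw [hone i] at this
    norm_num at this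
  choose σ₀ hσ₀ using hex
  have huniq : ∀ i j, C i j ≠ 0 → j = σ₀ i := by
    intro i j hj
    have h1 : μ j = B Q (u i) (u i) := by
      have := hrow i j
      rw [mul_eq_mul_right_iff] at this
      rcases this with h | h
      · exact h
      · exact absurd h hj
    have h2 : μ (σ₀ i) = B Q (u i) (u i) := by
      have := hrow i (σ₀ i)
      rw [mul_eq_mul_right_iff] at this
      rcases this with h | h
      · exact h
      · exact absurd h (hσ₀ i)
    exact hμ (h1.trans h2.symm)
  have hval : ∀ i, C i (σ₀ i) = 1 ∨ C i (σ₀ i) = -1 := by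
    intro i
    apply sq_eq_one_cases
    rw [← hone i, Finset.sum_eq_single (σ₀ i)]
    · intro j _ hj
      rcases eq_or_ne (C i j) 0 with h | h
      · rw [h]; ring
      · exact absurd (huniq i j h) hj
    · simp
  have hinj : Function.Injective σ₀ := by
    intro i k hik
    by_contra hne
    have h := hCC i k
    rw [if_neg hne] at h
    rw [Finset.sum_eq_single (σ₀ i)] at h
    · rcases mul_eq_zero.mp h with h' | h'
      · exact hσ₀ i h'
      · rw [hik] at h'
        exact hσ₀ k h'
    · intro j _ hj
      rcases eq_or_ne (C i j) 0 with h' | h'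
      · rw [h']; ring
      · exact absurd (huniq i j h') hj
    · simp
  let σ : Equiv.Perm (Fin n) := Equiv.ofBijective σ₀ (Finite.injective_iff_bijective.mp hinj)
  refine ⟨σ, fun i => C i (σ₀ i), hval, ?_⟩
  intro i
  have := hexp i
  rw [Finset.sum_eq_single (σ₀ i)] at this
  · funext m
    rw [congrFun this m]
    simp [σ, Equiv.ofBijective, smul_eq_mul]
  · intro j _ hj
    rcases eq_or_ne (C i j) 0 with h' | h'
    · rw [h', zero_smul]
    · exact absurd (huniq i j h') hj
  · simp

lemma hBww {Q : Matrix (Fin n) (Fin n) ℝ} {w : Fin n → Fin n → ℝ} {μ : Fin n → ℝ}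
    (hw : OrthonormalVecs n w) (heig : ∀ i, Q.mulVec (w i) = μ i • w i) (i j : Fin n) :
    B Q (w i) (w j) = if i = j then μ j else 0 := by
  have : B Q (w i) (w j) = μ j * ∑ m, w i m * w j m := by
    simp only [B, heig j]
    rw [dotProduct]
    simp only [Pi.smul_apply, smul_eq_mul]
    rw [Finset.mul_sum]
    exact Finset.sum_congr rfl fun m _ => by ring
  rw [this, hw i j]
  split_ifs <;> ring

lemma mu_pos {Q : Matrix (Fin n) (Fin n) ℝ} {w : Fin n → Fin n → ℝ} {μ : Fin n → ℝ}
    (hQpos : ∀ x : Fin n → ℝ, x ≠ 0 → 0 < qform n Q x)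
    (hw : OrthonormalVecs n w) (heig : ∀ i, Q.mulVec (w i) = μ i • w i) (j : Fin n) :
    0 < μ j := by
  have hw0 : w j ≠ 0 := by
    intro h
    have := hw j j
    rw [if_pos rfl, h] at this
    simp at this
  have h1 := hQpos (w j) hw0
  rw [qform_eq, hBww hw heig j j, if_pos rfl] at h1
  exact h1

lemma qform_sum {Q : Matrix (Fin n) (Fin n) ℝ} {w : Fin n → Fin n → ℝ} {μ : Fin n → ℝ}
    (hw : OrthonormalVecs n w) (heig : ∀ i, Q.mulVec (w i) = μ i • w i) (d : Fin n → ℝ) :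
    qform n Q (fun m => ∑ i, d i * w i m) = ∑ i, (d i * d i) * μ i := by
  have h0 : (fun m => ∑ i, d i * w i m) = fun m => (0 : Fin n → ℝ) m + ∑ i, d i * w i m := by
    funext m; simp
  rw [h0, expand]
  have hz1 : B Q (0 : Fin n → ℝ) (0 : Fin n → ℝ) = 0 := by simp [B]
  have hz2 : ∀ z, B Q (0 : Fin n → ℝ) z = 0 := fun z => by simp [B]
  have hz3 : ∀ z, B Q z (0 : Fin n → ℝ) = 0 := fun z => by simp [B, Matrix.mulVec_zero]
  simp only [hz1, hz2, hz3, mul_zero, Finset.sum_const_zero, add_zero, zero_add]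
  apply Finset.sum_congr rfl
  intro i _
  rw [Finset.sum_eq_single i]
  · rw [hBww hw heig i i, if_pos rfl]
  · intro j _ hj; rw [hBww hw heig i j, if_neg (Ne.symm hj)]; ring
  · simp

lemma coord {w : Fin n → Fin n → ℝ} (hw : OrthonormalVecs n w) (d : Fin n → ℝ) (k : Fin n) :
    ∑ m, (∑ j, d j * w j m) * w k m = d k := by
  have hm : ∀ m, (∑ j, d j * w j m) * w k m = ∑ j, d j * (w j m * w k m) := by
    intro m
    rw [Finset.sum_mul]
    exact Finset.sum_congr rfl fun j _ => by ring
  simp only [hm]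
  rw [Finset.sum_comm]
  rw [Finset.sum_eq_single k]
  · rw [← Finset.mul_sum, hw k k, if_pos rfl, mul_one]
  · intro j _ hj
    rw [← Finset.mul_sum, hw j k, if_neg hj, mul_zero]
  · simp

lemma sign_mul {s t : ℝ} (hs : s = 1 ∨ s = -1) (ht : t = 1 ∨ t = -1) :
    s * t = 1 ∨ s * t = -1 := by
  rcases hs with h | h <;> rcases ht with h' | h' <;> rw [h, h'] <;> norm_num

end EBox2

/-- The vertex sets of the similar copies of the box with edge lengths `a` (up to positive
scaling) that are inscribed in the ellipsoid `{x | qform n Q (x - c) ≤ 1}`: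
orthonormal edge directions `u`, scale `r > 0`, centre `p`, and all `2ⁿ` vertices
on the boundary of the ellipsoid. -/
def inscribedSimilarCopies (n : ℕ) (Q : Matrix (Fin n) (Fin n) ℝ) (c : Fin n → ℝ)
    (a : Fin n → ℝ) : Set (Set (Fin n → ℝ)) :=
  {V | ∃ (p : Fin n → ℝ) (u : Fin n → Fin n → ℝ) (r : ℝ),
    OrthonormalVecs n u ∧ 0 < r ∧
    V = {x | ∃ ε : Fin n → ℝ, (∀ i, ε i = 1 ∨ ε i = -1) ∧
          x = fun m => p m + ∑ i, ε i * (r * a i) * u i m} ∧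
    ∀ x ∈ V, qform n Q (x - c) = 1}

open EBox EBox2

/-- An ellipsoid `E ⊆ ℝⁿ` (centre `c`, positive definite symmetric form `Q`)
with pairwise different axis lengths admits exactly `n!/(n₁!⋯n_k!)` inscribed similar copies of
a given box with edge lengths `a₁ ≤ ⋯ ≤ aₙ` (where `n₁, …, n_k` are the multiplicities of the
edge lengths; this multinomial coefficient is the number of distinct rearrangements of the tuple
`a`), and every such inscribed copy is centred at the centre of `E`. -/
theorem ellipsoid_inscribed_similar_boxes_count
    (n : ℕ) (hn : 0 < n)
    (Q : Matrix (Fin n) (Fin n) ℝ) (c : Fin n → ℝ)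
    (hQsym : Q.transpose = Q)
    (hQpos : ∀ x : Fin n → ℝ, x ≠ 0 → 0 < qform n Q x)
    (heig : ∃ (w : Fin n → Fin n → ℝ) (μ : Fin n → ℝ),
      OrthonormalVecs n w ∧ Function.Injective μ ∧ ∀ i, Q.mulVec (w i) = μ i • w i)
    (a : Fin n → ℝ) (ha : ∀ i, 0 < a i) (hmono : Monotone a) :
    Nat.card (inscribedSimilarCopies n Q c a) =
      Nat.card {b : Fin n → ℝ // ∃ σ : Equiv.Perm (Fin n), b = a ∘ σ} ∧
    ∀ (p : Fin n → ℝ) (u : Fin n → Fin n → ℝ) (r : ℝ),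
      OrthonormalVecs n u → 0 < r →
      (∀ x ∈ {x : Fin n → ℝ | ∃ ε : Fin n → ℝ, (∀ i, ε i = 1 ∨ ε i = -1) ∧
            x = fun m => p m + ∑ i, ε i * (r * a i) * u i m},
        qform n Q (x - c) = 1) →
      p = c := by
  classical
  obtain ⟨w, μ, hw, hμ, heig⟩ := heig
  have hcentre : ∀ (p : Fin n → ℝ) (u : Fin n → Fin n → ℝ) (r : ℝ),
      OrthonormalVecs n u → 0 < r →
      (∀ x ∈ {x : Fin n → ℝ | ∃ ε : Fin n → ℝ, (∀ i, ε i = 1 ∨ ε i = -1) ∧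
            x = fun m => p m + ∑ i, ε i * (r * a i) * u i m},
        qform n Q (x - c) = 1) → p = c := by
    intro p u r hu hr hon
    exact (centre_and_orth hQsym hQpos hu hr ha (fun ε hε => hon _ ⟨ε, hε, rfl⟩)).1
  refine ⟨?_, hcentre⟩
  have hμpos : ∀ j, 0 < μ j := mu_pos hQpos hw heig
  set S : (Fin n → ℝ) → ℝ := fun b => ∑ j, (b j * b j) * μ j with hSdef
  have hSpos : ∀ b : Fin n → ℝ, (∀ j, 0 < b j) → 0 < S b := by
    intro b hb
    apply Finset.sum_pos
    · intro j _; exact mul_pos (mul_pos (hb j) (hb j)) (hμpos j)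
    · have : Nonempty (Fin n) := Fin.pos_iff_nonempty.mp hn
      exact Finset.univ_nonempty
  set rb : (Fin n → ℝ) → ℝ := fun b => Real.sqrt (1 / S b) with hrbdef
  have hrbpos : ∀ b : Fin n → ℝ, (∀ j, 0 < b j) → 0 < rb b := fun b hb =>
    Real.sqrt_pos.mpr (one_div_pos.mpr (hSpos b hb))
  have hrbsq : ∀ b : Fin n → ℝ, (∀ j, 0 < b j) → rb b * rb b * S b = 1 := by
    intro b hb
    have h1 : (0:ℝ) ≤ 1 / S b := le_of_lt (one_div_pos.mpr (hSpos b hb))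
    have h2 : rb b * rb b = 1 / S b := Real.mul_self_sqrt h1
    rw [h2]
    exact one_div_mul_cancel (ne_of_gt (hSpos b hb))
  set VS : (Fin n → ℝ) → Set (Fin n → ℝ) := fun b =>
    {x | ∃ ε : Fin n → ℝ, (∀ i, ε i = 1 ∨ ε i = -1) ∧
        x = fun m => c m + ∑ j, ε j * (rb b * b j) * w j m} with hVSdef
  have hbdyVS : ∀ b : Fin n → ℝ, (∀ j, 0 < b j) → ∀ x ∈ VS b, qform n Q (x - c) = 1 := by
    rintro b hb x ⟨ε, hε, rfl⟩
    have hxc : ((fun m => c m + ∑ j, ε j * (rb b * b j) * w j m) - c)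
        = fun m => ∑ j, (ε j * (rb b * b j)) * w j m := by
      funext m
      simp [Pi.sub_apply]
    rw [hxc, qform_sum hw heig]
    have hterm : ∀ j, ((ε j * (rb b * b j)) * (ε j * (rb b * b j))) * μ j
        = (rb b * rb b) * ((b j * b j) * μ j) := by
      intro j; rcases hε j with h | h <;> rw [h] <;> ring
    rw [Finset.sum_congr rfl (fun j _ => hterm j), ← Finset.mul_sum]
    exact hrbsq b hb
  -- membership of canonical vertex sets
  have hmemVS : ∀ (b : Fin n → ℝ) (σ : Equiv.Perm (Fin n)), b = a ∘ σ →
      VS b ∈ inscribedSimilarCopies n Q c a := by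
    rintro b σ rfl
    have hb : ∀ j, 0 < (a ∘ σ) j := fun j => ha (σ j)
    refine ⟨c, fun i => w (σ.symm i), rb (a ∘ σ), ?_, hrbpos _ hb, ?_, hbdyVS _ hb⟩
    · intro i j
      rw [hw (σ.symm i) (σ.symm j)]
      by_cases h : i = j
      · rw [if_pos h, if_pos (by rw [h])]
      · rw [if_neg h, if_neg (fun e => h (σ.symm.injective e))]
    · ext x
      simp only [hVSdef, Set.mem_setOf_eq]
      constructor
      · rintro ⟨ε, hε, rfl⟩
        refine ⟨fun i => ε (σ.symm i), fun i => hε _, ?_⟩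
        funext m
        congr 1
        calc ∑ j, ε j * (rb (a ∘ σ) * (a ∘ σ) j) * w j m
            = ∑ j, (fun i => ε (σ.symm i) * (rb (a ∘ σ) * a i) * w (σ.symm i) m) (σ j) := by
              apply Finset.sum_congr rfl
              intro j _
              simp [Function.comp]
          _ = ∑ i, ε (σ.symm i) * (rb (a ∘ σ) * a i) * w (σ.symm i) m :=
              Equiv.sum_comp σ (fun i => ε (σ.symm i) * (rb (a ∘ σ) * a i) * w (σ.symm i) m)
      · rintro ⟨ε, hε, rfl⟩
        refine ⟨fun j => ε (σ j), fun j => hε _, ?_⟩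
        funext m
        congr 1
        calc ∑ i, ε i * (rb (a ∘ σ) * a i) * w (σ.symm i) m
            = ∑ j, (fun i => ε i * (rb (a ∘ σ) * a i) * w (σ.symm i) m) (σ j) :=
              (Equiv.sum_comp σ (fun i => ε i * (rb (a ∘ σ) * a i) * w (σ.symm i) m)).symm
          _ = ∑ j, ε (σ j) * (rb (a ∘ σ) * (a ∘ σ) j) * w j m := by
              apply Finset.sum_congr rfl
              intro j _
              simp [Function.comp]
  set F : {b : Fin n → ℝ // ∃ σ : Equiv.Perm (Fin n), b = a ∘ σ} →
      (inscribedSimilarCopies n Q c a) := fun b =>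
    ⟨VS b.1, hmemVS b.1 b.2.choose b.2.choose_spec⟩ with hFdef
  have hbpos : ∀ (b : {b : Fin n → ℝ // ∃ σ : Equiv.Perm (Fin n), b = a ∘ σ}) (j : Fin n),
      0 < b.1 j := by
    rintro ⟨b, σ, rfl⟩ j
    exact ha (σ j)
  have hsuma : ∀ (b : {b : Fin n → ℝ // ∃ σ : Equiv.Perm (Fin n), b = a ∘ σ}),
      ∑ j, b.1 j = ∑ j, a j := by
    rintro ⟨b, σ, rfl⟩
    simpa [Function.comp] using Equiv.sum_comp σ a
  have hinj : Function.Injective F := by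
    intro b b' heq
    have hVeq : VS b.1 = VS b'.1 := congrArg Subtype.val heq
    have hx0 : (fun m => c m + ∑ j, (fun _ : Fin n => (1:ℝ)) j * (rb b.1 * b.1 j) * w j m)
        ∈ VS b.1 := ⟨fun _ => 1, fun _ => Or.inl rfl, rfl⟩
    rw [hVeq] at hx0
    obtain ⟨ε, hε, hxeq⟩ := hx0
    have hsum : ∀ m : Fin n, ∑ j, ((1:ℝ) * (rb b.1 * b.1 j)) * w j m
        = ∑ j, (ε j * (rb b'.1 * b'.1 j)) * w j m := by
      intro m
      have h := congrFun hxeq m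
      simp only [] at h
      exact add_left_cancel h
    have hco : ∀ k, (1:ℝ) * (rb b.1 * b.1 k) = ε k * (rb b'.1 * b'.1 k) := by
      intro k
      calc (1:ℝ) * (rb b.1 * b.1 k)
          = ∑ m, (∑ j, ((1:ℝ) * (rb b.1 * b.1 j)) * w j m) * w k m :=
            (coord hw (fun j => (1:ℝ) * (rb b.1 * b.1 j)) k).symm
        _ = ∑ m, (∑ j, (ε j * (rb b'.1 * b'.1 j)) * w j m) * w k m := by
            apply Finset.sum_congr rfl
            intro m _
            rw [hsum m]
        _ = ε k * (rb b'.1 * b'.1 k) := coord hw (fun j => ε j * (rb b'.1 * b'.1 j)) k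
    have hpos1 : ∀ k, 0 < rb b.1 * b.1 k :=
      fun k => mul_pos (hrbpos _ (hbpos b)) (hbpos b k)
    have hpos2 : ∀ k, 0 < rb b'.1 * b'.1 k :=
      fun k => mul_pos (hrbpos _ (hbpos b')) (hbpos b' k)
    have hco2 : ∀ k, rb b.1 * b.1 k = rb b'.1 * b'.1 k := by
      intro k
      have h := hco k
      rcases hε k with h1 | h1
      · rw [h1] at h; linarith [h]
      · rw [h1] at h
        have := hpos1 k
        have := hpos2 k
        nlinarith
    have hrr : rb b.1 = rb b'.1 := by
      have hs : rb b.1 * ∑ j, b.1 j = rb b'.1 * ∑ j, b'.1 j := by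
        rw [Finset.mul_sum, Finset.mul_sum]
        exact Finset.sum_congr rfl fun j _ => hco2 j
      rw [hsuma b, hsuma b'] at hs
      have hsa : 0 < ∑ j, a j :=
        Finset.sum_pos (fun j _ => ha j)
          (by have : Nonempty (Fin n) := Fin.pos_iff_nonempty.mp hn
              exact Finset.univ_nonempty)
      exact mul_right_cancel₀ (ne_of_gt hsa) hs
    have hbb : b.1 = b'.1 := by
      funext k
      have hkk := hco2 k
      rw [hrr] at hkk
      exact mul_left_cancel₀ (ne_of_gt (hrbpos _ (hbpos b'))) hkk
    exact Subtype.ext hbb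
  have hsurj : Function.Surjective F := by
    rintro ⟨V, hV⟩
    obtain ⟨p, u, r, hu, hr, hVeq, hbdy⟩ := hV
    have hon : ∀ ε : Fin n → ℝ, (∀ i, ε i = 1 ∨ ε i = -1) →
        qform n Q ((fun m => p m + ∑ i, ε i * (r * a i) * u i m) - c) = 1 := by
      intro ε hε
      exact hbdy _ (by rw [hVeq]; exact ⟨ε, hε, rfl⟩)
    obtain ⟨hpc, horth⟩ := centre_and_orth hQsym hQpos hu hr ha hon
    obtain ⟨σ, τ, hτ, huw⟩ := signed_perm hw hμ heig hu horth
    set b : Fin n → ℝ := a ∘ σ.symm with hbdef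
    have hb : ∀ j, 0 < b j := fun j => ha (σ.symm j)
    have hbσ : ∀ i, b (σ i) = a i := by
      intro i; simp [hbdef, Function.comp]
    -- the scaling factor is forced
    have hrS : r * r * S b = 1 := by
      have h1 := hon (fun _ => 1) (fun _ => Or.inl rfl)
      have hxc : ((fun m => p m + ∑ i, (fun _ : Fin n => (1:ℝ)) i * (r * a i) * u i m) - c)
          = fun m => ∑ j, (τ (σ.symm j) * (r * b j)) * w j m := by
        funext m
        have hterm : ∀ i, (1:ℝ) * (r * a i) * u i m
            = (fun j => (τ (σ.symm j) * (r * b j)) * w j m) (σ i) := by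
          intro i
          rw [congrFun (huw i) m]
          simp only [Equiv.symm_apply_apply, hbσ]
          ring
        rw [Pi.sub_apply, hpc]
        have hss : ∑ i, (fun _ : Fin n => (1:ℝ)) i * (r * a i) * u i m
            = ∑ j, (τ (σ.symm j) * (r * b j)) * w j m := by
          rw [Finset.sum_congr rfl (fun i _ => hterm i)]
          exact Equiv.sum_comp σ (fun j => (τ (σ.symm j) * (r * b j)) * w j m)
        rw [hss]
        ring
      rw [hxc, qform_sum hw heig] at h1
      have hterm2 : ∀ j, ((τ (σ.symm j) * (r * b j)) * (τ (σ.symm j) * (r * b j))) * μ j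
          = (r * r) * ((b j * b j) * μ j) := by
        intro j; rcases hτ (σ.symm j) with h | h <;> rw [h] <;> ring
      rw [Finset.sum_congr rfl (fun j _ => hterm2 j), ← Finset.mul_sum] at h1
      exact h1
    have hrrb : rb b = r := by
      have h2 := hrbsq b hb
      have hSb := hSpos b hb
      have hsq : (rb b - r) * (rb b + r) * S b = 0 := by
        have : (rb b * rb b - r * r) * S b = 0 := by
          rw [sub_mul, hrS, h2]; ring
        calc (rb b - r) * (rb b + r) * S b = (rb b * rb b - r * r) * S b := by ring
          _ = 0 := this
      rcases mul_eq_zero.mp hsq with h' | h'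
      · rcases mul_eq_zero.mp h' with h'' | h''
        · linarith
        · have := hrbpos b hb
          linarith
      · exact absurd h' (ne_of_gt hSb)
    refine ⟨⟨b, σ.symm, rfl⟩, ?_⟩
    apply Subtype.ext
    show VS b = V
    rw [hVeq, hpc]
    ext x
    simp only [hVSdef, Set.mem_setOf_eq]
    constructor
    · rintro ⟨ε, hε, rfl⟩
      refine ⟨fun i => ε (σ i) * τ i, fun i => sign_mul (hε _) (hτ _), ?_⟩
      funext m
      congr 1
      rw [hrrb]
      calc ∑ j, ε j * (r * b j) * w j m
          = ∑ i, (fun j => ε j * (r * b j) * w j m) (σ i) :=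
            (Equiv.sum_comp σ (fun j => ε j * (r * b j) * w j m)).symm
        _ = ∑ i, (ε (σ i) * τ i) * (r * a i) * u i m := by
            apply Finset.sum_congr rfl
            intro i _
            rw [congrFun (huw i) m]
            simp only [hbσ]
            rcases hτ i with h | h <;> rw [h] <;> ring
    · rintro ⟨ε, hε, rfl⟩
      refine ⟨fun j => ε (σ.symm j) * τ (σ.symm j), fun j => sign_mul (hε _) (hτ _), ?_⟩
      funext m
      congr 1
      rw [hrrb]
      calc ∑ i, ε i * (r * a i) * u i m
          = ∑ i, (fun j => (ε (σ.symm j) * τ (σ.symm j)) * (r * b j) * w j m) (σ i) := by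
            apply Finset.sum_congr rfl
            intro i _
            rw [congrFun (huw i) m]
            simp only [Equiv.symm_apply_apply, hbσ]
            rcases hτ i with h | h <;> rw [h] <;> ring
        _ = ∑ j, (ε (σ.symm j) * τ (σ.symm j)) * (r * b j) * w j m :=
            Equiv.sum_comp σ (fun j => (ε (σ.symm j) * τ (σ.symm j)) * (r * b j) * w j m)
  exact (Nat.card_eq_of_bijective F ⟨hinj, hsurj⟩).symm
end
end

section
/- Let a₁₁,…,aₙₙ be pairwise distinct positive reals, let F(x₁,…,xₙ) := Σᵢ aᵢᵢ xᵢ² − 1, so that E := {F ≤ 0} is an ellipsoid centred at the origin with pairwise different axis lengths, and let d₁,…,dₙ > 0 satisfy Σᵢ aᵢᵢ dᵢ² = 1, so that the points v₁,…,v_{2ⁿ}, namely (±d₁,…,±dₙ), are the vertices of a box inscribed in E. Define the analytic map f : SO(n) → ℝ^{2ⁿ} by f(A) = (F(A v₁),…,F(A v_{2ⁿ})). Then the differential of f at the identity matrix has full rank n(n−1)/2, and the image of this differential meets the diagonal Δ = {(λ,…,λ) : λ ∈ ℝ} of ℝ^{2ⁿ} only at the origin; explicitly, for every nonzero skew-symmetric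 n×n matrix D = (dα_{ij}), the numbers 2·Σ_{i<j} (aᵢᵢ − a_{jj}) dα_{ij} xᵢ x_j, as (x₁,…,xₙ) ranges over the 2ⁿ points (±d₁,…,±dₙ), are not all equal. -/
/-!
Evaluate the vector at the four sign vectors `1`, `1` with the `k`-th sign flipped, `1` with
the `l`-th sign flipped, and `1` with both flipped. For the form `∑ i j, c i j * ε i * ε j` the
alternating sum of these four values is `4 * (c k l + c l k)`, so a form that is constant on sign
vectors has `c k l + c l k = 0` for all `k ≠ l`. Here `c k l = 2 (a k - a l) D k l d k d l`
for `k < l` and `c l k = 0`; as the `a i` are distinct and the `d i` nonzero, `D k l = 0`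
above the diagonal, and skew-symmetry forces `D = 0`.
-/

namespace Matrix

theorem eq_zero_of_transpose_eq_neg_of_upper_eq_zero {n R : Type*} [LinearOrder n] [AddGroup R]
    [IsAddTorsionFree R] {D : Matrix n n R} (hskew : Dᵀ = -D)
    (hupper : ∀ i j, i < j → D i j = 0) : D = 0 := by
  have hswap : ∀ i j, D j i = -D i j := fun i j => congrFun (congrFun hskew i) j
  ext i j
  rcases lt_trichotomy i j with hij | rfl | hij
  · exact hupper i j hij
  · exact self_eq_neg.mp (hswap i i)
  · rw [← neg_neg (D i j), ← hswap, hupper j i hij, neg_zero, zero_apply]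

end Matrix

section SignVectors

variable {ι : Type*} [Fintype ι]

theorem sum_sum_mul_sign_flip_alternating (c : ι → ι → ℝ) (u w : ι → ℝ) :
    (∑ i, ∑ j, c i j * 1 * 1)
      + (∑ i, ∑ j, c i j * (1 - 2 * u i - 2 * w i) * (1 - 2 * u j - 2 * w j))
      - (∑ i, ∑ j, c i j * (1 - 2 * u i) * (1 - 2 * u j))
      - (∑ i, ∑ j, c i j * (1 - 2 * w i) * (1 - 2 * w j))
      = 4 * ∑ i, ∑ j, c i j * (u i * w j + w i * u j) := by
  simp only [← Finset.sum_add_distrib, ← Finset.sum_sub_distrib, Finset.mul_sum]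
  exact Finset.sum_congr rfl fun i _ => Finset.sum_congr rfl fun j _ => by ring

variable [DecidableEq ι]

theorem add_swap_eq_zero_of_sum_sum_mul_sign_const (c : ι → ι → ℝ) {lam : ℝ}
    (hconst : ∀ ε : ι → ℝ, (∀ i, ε i = 1 ∨ ε i = -1) → ∑ i, ∑ j, c i j * ε i * ε j = lam)
    {k l : ι} (hkl : k ≠ l) : c k l + c l k = 0 := by
  let u : ι → ℝ := fun i => if i = k then 1 else 0
  let w : ι → ℝ := fun i => if i = l then 1 else 0
  have h₀ := hconst (fun _ => 1) fun _ => Or.inl rfl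
  have hkw := hconst (fun i => 1 - 2 * u i - 2 * w i) fun i => by
    by_cases hk : i = k <;> by_cases hl : i = l <;> simp_all [u, w] <;> norm_num
  have hk := hconst (fun i => 1 - 2 * u i) fun i => by
    by_cases hk : i = k <;> norm_num [u, hk]
  have hl := hconst (fun i => 1 - 2 * w i) fun i => by
    by_cases hl : i = l <;> norm_num [w, hl]
  have hsum := sum_sum_mul_sign_flip_alternating c u w
  rw [h₀, hkw, hk, hl] at hsum
  simp only [mul_add, Finset.sum_add_distrib, u, w, mul_ite, mul_one, mul_zero,
    Finset.sum_ite_eq', Finset.mem_univ, if_true] at hsum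
  linarith

end SignVectors

theorem inscribed_box_transversality_general
    (n : ℕ) (a : Fin n → ℝ)
    (hadist : ∀ i j, i ≠ j → a i ≠ a j)
    (d : Fin n → ℝ) (hd : ∀ i, 0 < d i)
    (D : Matrix (Fin n) (Fin n) ℝ) (hskew : D.transpose = -D) (hD : D ≠ 0) :
    ¬ ∃ lam : ℝ, ∀ ε : Fin n → ℝ, (∀ i, ε i = 1 ∨ ε i = -1) →
      2 * (∑ i, ∑ j, if i < j then
        (a i - a j) * D i j * (ε i * d i) * (ε j * d j) else 0) = lam := by
  rintro ⟨lam, h⟩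
  refine hD (Matrix.eq_zero_of_transpose_eq_neg_of_upper_eq_zero hskew fun k l hkl => ?_)
  let c : Fin n → Fin n → ℝ := fun i j =>
    if i < j then 2 * ((a i - a j) * D i j * d i * d j) else 0
  have hconst : ∀ ε : Fin n → ℝ, (∀ i, ε i = 1 ∨ ε i = -1) →
      ∑ i, ∑ j, c i j * ε i * ε j = lam := by
    intro ε hε
    rw [← h ε hε, Finset.mul_sum]
    refine Finset.sum_congr rfl fun i _ => ?_
    rw [Finset.mul_sum]
    refine Finset.sum_congr rfl fun j _ => ?_
    simp only [c]
    split_ifs <;> ring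
  have hckl := add_swap_eq_zero_of_sum_sum_mul_sign_const c hconst hkl.ne
  simp only [c, hkl, not_lt_of_gt hkl, if_true, if_false, add_zero] at hckl
  simpa [sub_eq_zero, hadist k l hkl.ne, (hd k).ne', (hd l).ne'] using hckl

/-- Let `E = {x | ∑ i, a i * x i ^ 2 ≤ 1}` be an ellipsoid centred at the
origin with pairwise different (positive) coefficients `a i`, and let `(±d₁, …, ±dₙ)`
(`d i > 0`, `∑ i, a i * d i ^ 2 = 1`) be the vertices of an inscribed box.  Consider the map
`f : SO(n) → ℝ^{2ⁿ}`, `f A = (F (A v₁), …, F (A v_{2ⁿ}))` with `F x = ∑ i, a i * x i ^ 2 - 1`.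
Its differential at the identity sends a skew-symmetric matrix `D` to the vector whose
coordinate at the vertex `x = (ε₁ d₁, …, εₙ dₙ)` is `2 ∑_{i<j} (a i - a j) D i j * x i * x j`;
the claim (full rank `n(n-1)/2` and image meeting the diagonal of `ℝ^{2ⁿ}` only at the origin)
is that, for every nonzero skew-symmetric `D`, these `2ⁿ` numbers are not all equal. -/
theorem inscribed_box_transversality
    (n : ℕ) (a : Fin n → ℝ) (ha : ∀ i, 0 < a i)
    (hadist : ∀ i j, i ≠ j → a i ≠ a j)
    (d : Fin n → ℝ) (hd : ∀ i, 0 < d i)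
    (hnorm : ∑ i, a i * d i ^ 2 = 1)
    (D : Matrix (Fin n) (Fin n) ℝ) (hskew : D.transpose = -D) (hD : D ≠ 0) :
    ¬ ∃ lam : ℝ, ∀ ε : Fin n → ℝ, (∀ i, ε i = 1 ∨ ε i = -1) →
      2 * (∑ i, ∑ j, if i < j then
        (a i - a j) * D i j * (ε i * d i) * (ε j * d j) else 0) = lam :=
  inscribed_box_transversality_general n a hadist d hd D hskew hD
end

section
/- Let G be a subgroup of S₄ of order 8 (a dihedral subgroup D₄, e.g. the one generated by the 4-cycle (1 2 3 4) and the transposition (1 3)). Then there is no G-equivariant map from (SO(3), ρ_G) to (S², τ_G); that is, there is no continuous map g : SO(3) → S² satisfying g(A·ι(σ)) = τ(σ)(g(A)) for all σ ∈ G and all A ∈ SO(3). -/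
noncomputable section

/-- `SO(3)`: real orthogonal 3×3 matrices of determinant 1. -/
def SO3 : Set (Matrix (Fin 3) (Fin 3) ℝ) :=
  {A | A * A.transpose = 1 ∧ A.det = 1}

/-- The unit sphere `S²` in `ℝ³`. -/
def unitSphere : Set (Fin 3 → ℝ) := {x | ∑ i, x i ^ 2 = 1}

/-- The vertices of the regular tetrahedron inscribed in `S²` obtained by choosing one
endpoint of each spatial diagonal of the cube with vertices `(±1/√3, ±1/√3, ±1/√3)`. -/
def tetra : Fin 4 → Fin 3 → ℝ := fun i =>
  (Real.sqrt 3)⁻¹ • (![![1, 1, 1], ![1, -1, -1], ![-1, 1, -1], ![-1, -1, 1]] i)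

/-- Given the tetrahedral representation `τ : S₄ → O(3)`, the embedding `ι : S₄ → SO(3)` as the
rotation group of the cube: `ι σ = τ σ` for `σ` even, and `ι σ = -τ σ` for `σ` odd. -/
def iotaOf (τ : Equiv.Perm (Fin 4) → Matrix (Fin 3) (Fin 3) ℝ)
    (σ : Equiv.Perm (Fin 4)) : Matrix (Fin 3) (Fin 3) ℝ :=
  if Equiv.Perm.sign σ = 1 then τ σ else -(τ σ)

/-! ### Auxiliary group theory: Sylow 2-subgroups of `S₄` -/

abbrev S4' := Equiv.Perm (Fin 4)

def ccP : S4' := finRotate 4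
def ttP : S4' := Equiv.swap 0 2

def Dlist : List S4' := [1, ccP, ccP^2, ccP^3, ttP, ccP*ttP, ccP^2*ttP, ccP^3*ttP]

def Psub : Subgroup S4' where
  carrier := {x | x ∈ Dlist}
  one_mem' := by decide
  mul_mem' := by decide
  inv_mem' := by decide

lemma mem_Psub_iff (x : S4') : x ∈ Psub ↔ x ∈ Dlist := Iff.rfl

lemma cardPsub : Nat.card Psub = 8 := by
  have h1 : (Psub : Set S4') = ↑(Dlist.toFinset) := by
    ext x; simp [Psub, Dlist]
  have h2 : Nat.card Psub = Set.ncard (Psub : Set S4') := (Nat.card_coe_set_eq _).symm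
  rw [h2, h1, Set.ncard_coe_finset]
  decide

instance : Fact (Nat.Prime 2) := ⟨by norm_num⟩

lemma card_eq_sylow : Nat.card Psub = 2 ^ (Nat.card S4').factorization 2 := by
  rw [cardPsub]
  have h24 : Nat.card S4' = 24 := by
    rw [Nat.card_eq_fintype_card]; simp [Fintype.card_perm]; rfl
  rw [h24]
  have h : (24:ℕ) = 2^3*3 := by norm_num
  rw [h, Nat.factorization_mul (by norm_num) (by norm_num),
    Nat.Prime.factorization_pow (by norm_num)]
  simp [Nat.Prime.factorization (by norm_num : Nat.Prime 3)]

def PsubSylow : Sylow 2 S4' := Sylow.ofCard Psub card_eq_sylow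

lemma conj_mem (G : Subgroup S4') (hG : Nat.card G = 8) :
    ∃ γ : S4', ∀ x : S4', x ∈ G ↔ γ⁻¹ * x * γ ∈ Psub := by
  have hGcard : Nat.card G = 2 ^ (Nat.card S4').factorization 2 := by
    rw [hG, ← card_eq_sylow]; exact cardPsub.symm
  let Gs : Sylow 2 S4' := Sylow.ofCard G hGcard
  obtain ⟨γ, hγ⟩ := MulAction.exists_smul_eq S4' PsubSylow Gs
  refine ⟨γ, fun x => ?_⟩
  have hGeq : (G : Subgroup S4') = (γ • PsubSylow : Sylow 2 S4') := by rw [hγ]; rfl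
  rw [hGeq, Sylow.smul_def, Sylow.pointwise_smul_def,
    Subgroup.mem_pointwise_smul_iff_inv_smul_mem]
  simp [MulAut.conj]
  constructor
  · intro h; convert h using 1; rfl
  · intro h; convert h using 1; rfl

/-! ### The three double transpositions and explicit matrices -/

def sV : Fin 3 → S4' := ![Equiv.swap 0 1 * Equiv.swap 2 3, Equiv.swap 0 2 * Equiv.swap 1 3,
  Equiv.swap 0 3 * Equiv.swap 1 2]

def DM : Fin 3 → Matrix (Fin 3) (Fin 3) ℝ :=
  fun a => Matrix.diagonal (fun i => if i = a then 1 else -1)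

def CM : Matrix (Fin 3) (Fin 3) ℝ := ![![0,0,1],![0,-1,0],![-1,0,0]]

def wz : Fin 4 → Fin 3 → ℝ := ![![1, 1, 1], ![1, -1, -1], ![-1, 1, -1], ![-1, -1, 1]]

def WM : Matrix (Fin 3) (Fin 3) ℝ := ![![1,1,-1],![1,-1,1],![1,-1,-1]]

lemma tetra_eq_wz (i : Fin 4) : tetra i = (Real.sqrt 3)⁻¹ • wz i := rfl

lemma sqrt3_inv_ne : (Real.sqrt 3)⁻¹ ≠ 0 := by positivity

lemma mulVec_wz_of_tetra {M : Matrix (Fin 3) (Fin 3) ℝ} {i j : Fin 4}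
    (h : M.mulVec (tetra i) = tetra j) : M.mulVec (wz i) = wz j := by
  rw [tetra_eq_wz, tetra_eq_wz, Matrix.mulVec_smul] at h
  exact smul_right_injective (Fin 3 → ℝ) sqrt3_inv_ne h

lemma matEq {M N : Matrix (Fin 3) (Fin 3) ℝ}
    (h : ∀ i : Fin 4, M.mulVec (wz i) = N.mulVec (wz i)) : M = N := by
  have hW : M * WM = N * WM := by
    ext i j
    fin_cases j <;> simp only [Matrix.mul_apply, Fin.sum_univ_three]
    · simpa [Matrix.mul_apply, WM, wz, Matrix.mulVec, dotProduct,
        Fin.sum_univ_three, Matrix.vecHead, Matrix.vecTail] using congrFun (h 0) i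
    · simpa [Matrix.mul_apply, WM, wz, Matrix.mulVec, dotProduct,
        Fin.sum_univ_three, Matrix.vecHead, Matrix.vecTail] using congrFun (h 1) i
    · simpa [Matrix.mul_apply, WM, wz, Matrix.mulVec, dotProduct,
        Fin.sum_univ_three, Matrix.vecHead, Matrix.vecTail] using congrFun (h 2) i
  have hdet : IsUnit WM.det := by
    have h4 : WM.det = 4 := by
      rw [Matrix.det_fin_three]
      simp [WM, Matrix.det_fin_three, Matrix.vecHead, Matrix.vecTail]
      norm_num
    rw [h4]; norm_num
  calc M = M * WM * WM⁻¹ := by rw [Matrix.mul_assoc, Matrix.mul_nonsing_inv _ hdet, Matrix.mul_one]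
    _ = N * WM * WM⁻¹ := by rw [hW]
    _ = N := by rw [Matrix.mul_assoc, Matrix.mul_nonsing_inv _ hdet, Matrix.mul_one]

lemma sV_apply : ∀ (a : Fin 3) (i : Fin 4), sV a i = ![![1,0,3,2],![2,3,0,1],![3,2,1,0]] a i := by
  decide

lemma ccP_apply : ∀ i, ccP i = ![1,2,3,0] i := by decide

lemma DM_wz : ∀ (a : Fin 3) (i : Fin 4), (DM a).mulVec (wz i) = wz (sV a i) := by
  intro a i
  rw [sV_apply]
  fin_cases a <;> fin_cases i <;>
    (ext j; fin_cases j <;>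
      simp [DM, wz, Matrix.mulVec_diagonal, Matrix.vecHead, Matrix.vecTail])

lemma CM_wz : ∀ i, CM.mulVec (wz i) = wz (ccP i) := by
  intro i
  rw [ccP_apply]
  fin_cases i <;>
    (ext j; fin_cases j <;>
      norm_num [CM, wz, Matrix.mulVec, dotProduct, Fin.sum_univ_three,
        Matrix.vecHead, Matrix.vecTail, Matrix.cons_val_two, Matrix.cons_val_three])

section Tau
variable (τ : S4' → Matrix (Fin 3) (Fin 3) ℝ)
variable (hτ : ∀ σ i, (τ σ).mulVec (tetra i) = tetra (σ i))

include hτ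

lemma tau_wz : ∀ σ i, (τ σ).mulVec (wz i) = wz (σ i) := fun σ i => mulVec_wz_of_tetra (hτ σ i)

lemma tau_eq_of {σ : S4'} {E : Matrix (Fin 3) (Fin 3) ℝ}
    (hE : ∀ i, E.mulVec (wz i) = wz (σ i)) : τ σ = E :=
  matEq fun i => by rw [tau_wz τ hτ, hE]

lemma tau_one : τ 1 = 1 := tau_eq_of τ hτ fun i => by simp

lemma tau_mul (a b : S4') : τ a * τ b = τ (a * b) := by
  refine (tau_eq_of τ hτ fun i => ?_).symm
  rw [← Matrix.mulVec_mulVec, tau_wz τ hτ, tau_wz τ hτ]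
  rfl

lemma tau_sV (a : Fin 3) : τ (sV a) = DM a := tau_eq_of τ hτ (DM_wz a)
lemma tau_ccP : τ ccP = CM := tau_eq_of τ hτ CM_wz

lemma tau_inv_mul (a : S4') : τ a⁻¹ * τ a = 1 := by
  rw [tau_mul τ hτ, inv_mul_cancel, tau_one τ hτ]

lemma det_tau_conj (γ σ : S4') : (τ (γ * σ * γ⁻¹)).det = (τ σ).det := by
  rw [← tau_mul τ hτ, ← tau_mul τ hτ, Matrix.det_mul, Matrix.det_mul]
  have h1 : (τ γ).det * (τ γ⁻¹).det = 1 := by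
    rw [← Matrix.det_mul, tau_mul τ hτ, mul_inv_cancel, tau_one τ hτ, Matrix.det_one]
  calc (τ γ).det * (τ σ).det * (τ γ⁻¹).det
      = (τ γ).det * (τ γ⁻¹).det * (τ σ).det := by ring
    _ = (τ σ).det := by rw [h1, one_mul]

lemma det_tau_ccP : (τ ccP).det = -1 := by
  rw [tau_ccP τ hτ, Matrix.det_fin_three]
  simp [CM, Matrix.det_fin_three, Matrix.vecHead, Matrix.vecTail]

end Tau

/-! ### SO3 facts and rotation paths -/

lemma one_mem_SO3 : (1 : Matrix (Fin 3) (Fin 3) ℝ) ∈ SO3 := by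
  constructor <;> simp [SO3]

lemma mul_mem_SO3 {A B : Matrix (Fin 3) (Fin 3) ℝ} (hA : A ∈ SO3) (hB : B ∈ SO3) :
    A * B ∈ SO3 := by
  obtain ⟨hA1, hA2⟩ := hA
  obtain ⟨hB1, hB2⟩ := hB
  constructor
  · rw [Matrix.transpose_mul, Matrix.mul_assoc, ← Matrix.mul_assoc B, hB1, Matrix.one_mul, hA1]
  · rw [Matrix.det_mul, hA2, hB2, one_mul]

lemma neg_mem_SO3 {M : Matrix (Fin 3) (Fin 3) ℝ} (h1 : M * M.transpose = 1)
    (h2 : M.det = -1) : (-M) ∈ SO3 := by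
  constructor
  · rw [Matrix.transpose_neg, neg_mul_neg, h1]
  · rw [Matrix.det_neg, h2]; norm_num

def R0 (θ : ℝ) : Matrix (Fin 3) (Fin 3) ℝ :=
  ![![1,0,0],![0,Real.cos θ,-Real.sin θ],![0,Real.sin θ,Real.cos θ]]
def R1 (θ : ℝ) : Matrix (Fin 3) (Fin 3) ℝ :=
  ![![Real.cos θ,0,Real.sin θ],![0,1,0],![-Real.sin θ,0,Real.cos θ]]

lemma R0_mem (θ : ℝ) : R0 θ ∈ SO3 := by
  constructor
  · ext i j
    fin_cases i <;> fin_cases j <;>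
      simp only [Matrix.mul_apply, Fin.sum_univ_three, Matrix.transpose_apply] <;>
      simp [R0, Matrix.mul_apply, Fin.sum_univ_three, Matrix.vecHead, Matrix.vecTail,
        Matrix.one_apply, Fin.ext_iff, Matrix.transpose_apply] <;>
      nlinarith [Real.sin_sq_add_cos_sq θ]
  · rw [Matrix.det_fin_three]
    simp [R0, Matrix.det_fin_three, Matrix.vecHead, Matrix.vecTail]
    nlinarith [Real.sin_sq_add_cos_sq θ]

lemma R1_mem (θ : ℝ) : R1 θ ∈ SO3 := by
  constructor
  · ext i j
    fin_cases i <;> fin_cases j <;>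
      simp only [Matrix.mul_apply, Fin.sum_univ_three, Matrix.transpose_apply] <;>
      simp [R1, Matrix.mul_apply, Fin.sum_univ_three, Matrix.vecHead, Matrix.vecTail,
        Matrix.one_apply, Fin.ext_iff, Matrix.transpose_apply] <;>
      nlinarith [Real.sin_sq_add_cos_sq θ]
  · rw [Matrix.det_fin_three]
    simp [R1, Matrix.det_fin_three, Matrix.vecHead, Matrix.vecTail]
    nlinarith [Real.sin_sq_add_cos_sq θ]

lemma R0_zero : R0 0 = 1 := by
  ext i j
  fin_cases i <;> fin_cases j <;>
    simp [R0, Matrix.one_apply, Fin.ext_iff, Matrix.vecHead, Matrix.vecTail]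

lemma R1_zero : R1 0 = 1 := by
  ext i j
  fin_cases i <;> fin_cases j <;>
    simp [R1, Matrix.one_apply, Fin.ext_iff, Matrix.vecHead, Matrix.vecTail]

lemma R0_pi : R0 Real.pi = DM 0 := by
  ext i j
  fin_cases i <;> fin_cases j <;>
    simp [R0, DM, Matrix.diagonal, Matrix.vecHead, Matrix.vecTail]

lemma R1_pi : R1 Real.pi = DM 1 := by
  ext i j
  fin_cases i <;> fin_cases j <;>
    simp [R1, DM, Matrix.diagonal, Fin.ext_iff, Matrix.vecHead, Matrix.vecTail]

lemma R0_cont : Continuous R0 := by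
  apply continuous_pi; intro i; apply continuous_pi; intro j
  fin_cases i <;> fin_cases j <;> simp [R0, Matrix.vecHead, Matrix.vecTail] <;> fun_prop

lemma R1_cont : Continuous R1 := by
  apply continuous_pi; intro i; apply continuous_pi; intro j
  fin_cases i <;> fin_cases j <;> simp [R1, Matrix.vecHead, Matrix.vecTail] <;> fun_prop

lemma path_contra (g : Matrix (Fin 3) (Fin 3) ℝ → Fin 3 → ℝ) (hc : ContinuousOn g SO3)
    (a : Fin 3) (R : ℝ → Matrix (Fin 3) (Fin 3) ℝ) (hR : Continuous R)
    (hmem : ∀ θ, R θ ∈ SO3) (hval : ∀ A ∈ SO3, g A a = 1 ∨ g A a = -1)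
    (hends : g (R Real.pi) a = - g (R 0) a) : False := by
  set φ : ℝ → ℝ := fun θ => g (R θ) a with hφ
  have hφc : ContinuousOn φ (Set.Icc 0 Real.pi) := by
    have h1 : ContinuousOn (fun θ => g (R θ)) (Set.Icc 0 Real.pi) :=
      hc.comp hR.continuousOn (fun θ _ => hmem θ)
    exact (continuous_apply a).comp_continuousOn h1
  have hpi : (0:ℝ) ≤ Real.pi := Real.pi_pos.le
  have hzero : ∃ θ ∈ Set.Icc (0:ℝ) Real.pi, φ θ = 0 := by
    rcases hval (R 0) (hmem 0) with h0 | h0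
    · have h1 : φ Real.pi = -1 := by rw [hφ]; simp only []; rw [hends, h0]
      have hmemI : (0:ℝ) ∈ Set.Icc (φ Real.pi) (φ 0) := by
        rw [h1]; simp only [hφ]; rw [h0]; norm_num
      obtain ⟨θ, hθ, hθ0⟩ := intermediate_value_Icc' hpi hφc hmemI
      exact ⟨θ, hθ, hθ0⟩
    · have h1 : φ Real.pi = 1 := by rw [hφ]; simp only []; rw [hends, h0]; norm_num
      have hmemI : (0:ℝ) ∈ Set.Icc (φ 0) (φ Real.pi) := by
        rw [h1]; simp only [hφ]; rw [h0]; norm_num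
      obtain ⟨θ, hθ, hθ0⟩ := intermediate_value_Icc hpi hφc hmemI
      exact ⟨θ, hθ, hθ0⟩
  obtain ⟨θ, _, hθ0⟩ := hzero
  rcases hval (R θ) (hmem θ) with h | h <;> rw [hφ] at hθ0 <;> simp only [] at hθ0 <;>
    rw [h] at hθ0 <;> norm_num at hθ0

lemma coords_of_fixed {x : Fin 3 → ℝ} {a : Fin 3} (hx : ∑ i, x i ^ 2 = 1)
    (hfix : (DM a).mulVec x = x) : (∀ j, j ≠ a → x j = 0) ∧ (x a = 1 ∨ x a = -1) := by
  have hz : ∀ j, j ≠ a → x j = 0 := by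
    intro j hj
    have h := congrFun hfix j
    simp only [DM] at h
    rw [Matrix.mulVec_diagonal, if_neg hj] at h
    linarith
  refine ⟨hz, ?_⟩
  have hsum : ∑ i, x i ^ 2 = x a ^ 2 :=
    Finset.sum_eq_single_of_mem a (Finset.mem_univ a) (fun b _ hb => by rw [hz b hb]; ring)
  rw [hsum] at hx
  have hx' : x a * x a = 1 := by nlinarith [hx]
  exact mul_self_eq_one_iff.mp hx'

/-! ### Group computations -/

set_option maxRecDepth 10000 in
lemma d0_conj : ∀ γ : S4', ∃ a : Fin 3, γ * (ccP⁻¹ * ttP⁻¹ * ccP * ttP) * γ⁻¹ = sV a := by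
  decide

lemma sV_conj_mem : ∀ (γ : S4') (a : Fin 3), γ⁻¹ * sV a * γ ∈ Dlist := by decide

lemma sign_ccP : Equiv.Perm.sign ccP = -1 := by decide
lemma sign_ttP : Equiv.Perm.sign ttP = -1 := by decide
lemma sign_sV : ∀ a : Fin 3, Equiv.Perm.sign (sV a) = 1 := by decide

lemma sign_conj (γ σ : S4') : Equiv.Perm.sign (γ * σ * γ⁻¹) = Equiv.Perm.sign σ := by
  simp only [map_mul, map_inv]
  rw [mul_comm (Equiv.Perm.sign γ) (Equiv.Perm.sign σ), mul_assoc]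
  rw [mul_inv_cancel, mul_one]

/-- For a subgroup `G ⊆ S₄` of order 8 (a dihedral subgroup `D₄`), there is
no continuous `G`-equivariant map `g : (SO(3), ρ_G) → (S², τ_G)`. -/
theorem no_D4_equivariant_map
    (τ : Equiv.Perm (Fin 4) → Matrix (Fin 3) (Fin 3) ℝ)
    (hτorth : ∀ σ, τ σ * (τ σ).transpose = 1)
    (hτ : ∀ σ i, (τ σ).mulVec (tetra i) = tetra (σ i))
    (G : Subgroup (Equiv.Perm (Fin 4))) (hG : Nat.card G = 8) :
    ¬ ∃ g : Matrix (Fin 3) (Fin 3) ℝ → (Fin 3 → ℝ),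
      ContinuousOn g SO3 ∧ (∀ A ∈ SO3, g A ∈ unitSphere) ∧
      ∀ σ ∈ G, ∀ A ∈ SO3, g (A * iotaOf τ σ) = (τ σ).mulVec (g A) := by
  rintro ⟨g, hgc, hgs, hge⟩
  obtain ⟨γ, hγ⟩ := conj_mem G hG
  set c' : S4' := γ * ccP * γ⁻¹ with hc'def
  set t' : S4' := γ * ttP * γ⁻¹ with ht'def
  have hc'G : c' ∈ G := by
    rw [hγ]
    have h : γ⁻¹ * c' * γ = ccP := by rw [hc'def]; group
    rw [h, mem_Psub_iff]
    decide
  have ht'G : t' ∈ G := by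
    rw [hγ]
    have h : γ⁻¹ * t' * γ = ttP := by rw [ht'def]; group
    rw [h, mem_Psub_iff]
    decide
  have hmulG : c' * t' ∈ G := mul_mem hc'G ht'G
  have hsVG : ∀ a : Fin 3, sV a ∈ G := fun a => by
    rw [hγ, mem_Psub_iff]; exact sV_conj_mem γ a
  -- signs
  have hsc' : Equiv.Perm.sign c' = -1 := by rw [hc'def, sign_conj, sign_ccP]
  have hst' : Equiv.Perm.sign t' = -1 := by rw [ht'def, sign_conj, sign_ttP]
  have hsmul : Equiv.Perm.sign (c' * t') = 1 := by
    rw [map_mul, hsc', hst']; decide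
  -- iota values
  have hι1 : iotaOf τ c' = -(τ c') := by
    rw [iotaOf, if_neg]; rw [hsc']; decide
  have hι2 : iotaOf τ t' = -(τ t') := by
    rw [iotaOf, if_neg]; rw [hst']; decide
  have hι3 : iotaOf τ (c' * t') = τ (c' * t') := by
    rw [iotaOf, if_pos hsmul]
  -- iota c' is in SO3
  have hdetc' : (τ c').det = -1 := by
    rw [hc'def, det_tau_conj τ hτ, det_tau_ccP τ hτ]
  have hιc'SO3 : iotaOf τ c' ∈ SO3 := by
    rw [hι1]; exact neg_mem_SO3 (hτorth c') hdetc'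
  -- the commutator element
  obtain ⟨a, ha⟩ := d0_conj γ
  have hdd : (t' * c')⁻¹ * (c' * t') = sV a := by
    rw [← ha, hc'def, ht'def]; group
  -- fixed direction lemma
  have hfix : ∀ A ∈ SO3, (DM a).mulVec (g A) = g A := by
    intro A hA
    have h1 : g (A * iotaOf τ c') = (τ c').mulVec (g A) := hge c' hc'G A hA
    have hA1 : A * iotaOf τ c' ∈ SO3 := mul_mem_SO3 hA hιc'SO3
    have h2 : g (A * iotaOf τ c' * iotaOf τ t') = (τ t').mulVec (g (A * iotaOf τ c')) :=
      hge t' ht'G _ hA1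
    have h3 : g (A * iotaOf τ (c' * t')) = (τ (c' * t')).mulVec (g A) := hge _ hmulG A hA
    have hkey : A * iotaOf τ c' * iotaOf τ t' = A * iotaOf τ (c' * t') := by
      rw [hι1, hι2, hι3, Matrix.mul_assoc, neg_mul_neg, tau_mul τ hτ]
    rw [hkey, h3, h1] at h2
    -- h2 : τ (c'*t') *ᵥ g A = τ t' *ᵥ (τ c' *ᵥ g A)
    rw [Matrix.mulVec_mulVec, tau_mul τ hτ] at h2
    -- apply τ ((t'*c')⁻¹)
    have h4 := congrArg (fun v => (τ ((t' * c')⁻¹)).mulVec v) h2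
    simp only [Matrix.mulVec_mulVec] at h4
    rw [tau_mul τ hτ, tau_mul τ hτ, hdd, inv_mul_cancel, tau_one τ hτ,
      Matrix.one_mulVec, tau_sV τ hτ] at h4
    exact h4
  -- coordinates of g A
  have hcoords : ∀ A ∈ SO3, (∀ j, j ≠ a → g A j = 0) ∧ (g A a = 1 ∨ g A a = -1) := by
    intro A hA
    exact coords_of_fixed (hgs A hA) (hfix A hA)
  have hval : ∀ A ∈ SO3, g A a = 1 ∨ g A a = -1 := fun A hA => (hcoords A hA).2
  -- the flipping double transposition
  set m : Fin 3 := if a = 0 then 1 else 0 with hmdef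
  have ham : a ≠ m := by
    rw [hmdef]; by_cases h : a = 0 <;> simp [h]
  have hflip : g (DM m) a = -(g 1 a) := by
    have hσm : iotaOf τ (sV m) = DM m := by
      rw [iotaOf, if_pos (sign_sV m), tau_sV τ hτ]
    have h := hge (sV m) (hsVG m) 1 one_mem_SO3
    rw [one_mul, hσm, tau_sV τ hτ] at h
    have h2 := congrFun h a
    rw [h2]
    simp only [DM]
    rw [Matrix.mulVec_diagonal, if_neg ham]
    ring
  -- apply the path argument
  by_cases ha0 : a = 0
  · -- m = 1, use R1
    have hm1 : m = 1 := by rw [hmdef, if_pos ha0]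
    refine path_contra g hgc a R1 R1_cont R1_mem hval ?_
    rw [R1_pi, R1_zero, ← hm1, hflip]
  · -- m = 0, use R0
    have hm0 : m = 0 := by rw [hmdef, if_neg ha0]
    refine path_contra g hgc a R0 R0_cont R0_mem hval ?_
    rw [R0_pi, R0_zero, ← hm0, hflip]
end
end

section
/- Let G ⊂ S₄ be either the subgroup generated by a single transposition (i j), or the subgroup generated by two disjoint transpositions (i j) and (k l) (so G ≅ C₂ × C₂), or the stabilizer in S₄ of one letter i (so G ≅ S₃). Then there exists a G-equivariant map from (SO(3), ρ_G) to (S², τ_G); that is, there is a continuous map g : SO(3) → S² satisfying g(A·ι(σ)) = τ(σ)(g(A)) for all σ ∈ G and all A ∈ SO(3). -/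
noncomputable section

/-! In all three cases `τ_G` fixes a point of `S²`, so a constant map is equivariant: the
stabilizer of the letter `i` fixes the vertex `tetra i`, and the other two groups preserve the
edge `{i, j}` of the tetrahedron, hence fix its normalized midpoint. -/

open Equiv Matrix Pointwise

lemma swap_mem_stabilizer_pair {α : Type*} [DecidableEq α] (i j : α) :
    swap i j ∈ MulAction.stabilizer (Perm α) ({i, j} : Finset α) := by
  rw [MulAction.mem_stabilizer_iff, Finset.smul_finset_insert, Finset.smul_finset_singleton]
  simp [Finset.pair_comm]

lemma swap_mem_stabilizer_pair_of_ne {α : Type*} [DecidableEq α] {i j k l : α} (hik : i ≠ k)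
    (hil : i ≠ l) (hjk : j ≠ k) (hjl : j ≠ l) :
    swap k l ∈ MulAction.stabilizer (Perm α) ({i, j} : Finset α) := by
  rw [MulAction.mem_stabilizer_iff, Finset.smul_finset_insert, Finset.smul_finset_singleton,
    Perm.smul_def, Perm.smul_def, swap_apply_of_ne_of_ne hik hil, swap_apply_of_ne_of_ne hjk hjl]

lemma tetra_mem_unitSphere (i : Fin 4) : tetra i ∈ unitSphere := by
  have h3 : Real.sqrt 3 ^ 2 = 3 := Real.sq_sqrt (by norm_num)
  fin_cases i <;> simp [unitSphere, tetra, Fin.sum_univ_succ, inv_pow, h3] <;> norm_num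

-- Distinct vertices have inner product `-1/3`, so `‖tetra i + tetra j‖² = 4/3`.
lemma tetra_pair_mem_unitSphere {i j : Fin 4} (hij : i ≠ j) :
    (Real.sqrt 3 / 2) • (tetra i + tetra j) ∈ unitSphere := by
  have h3 : Real.sqrt 3 ^ 2 = 3 := Real.sq_sqrt (by norm_num)
  have h0 : Real.sqrt 3 ≠ 0 := by positivity
  fin_cases i <;> fin_cases j <;> simp_all [unitSphere, tetra, Fin.sum_univ_succ] <;>
    · field_simp
      ring_nf
      simp

section Tetrahedral

variable {τ : Perm (Fin 4) → Matrix (Fin 3) (Fin 3) ℝ}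

lemma mulVec_sum_tetra (hτ : ∀ σ i, τ σ *ᵥ tetra i = tetra (σ i)) (σ : Perm (Fin 4))
    (s : Finset (Fin 4)) : τ σ *ᵥ ∑ x ∈ s, tetra x = ∑ x ∈ σ • s, tetra x := by
  rw [mulVec_sum, Finset.smul_finset_def, Finset.sum_image (MulAction.injective σ).injOn]
  simp only [hτ, Perm.smul_def]

lemma mulVec_smul_tetra_add_of_mem_stabilizer (hτ : ∀ σ i, τ σ *ᵥ tetra i = tetra (σ i))
    {i j : Fin 4} (hij : i ≠ j) {σ : Perm (Fin 4)}
    (hσ : σ ∈ MulAction.stabilizer (Perm (Fin 4)) ({i, j} : Finset (Fin 4))) (c : ℝ) :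
    τ σ *ᵥ (c • (tetra i + tetra j)) = c • (tetra i + tetra j) := by
  rw [mulVec_smul, ← Finset.sum_pair hij, mulVec_sum_tetra hτ, MulAction.mem_stabilizer_iff.1 hσ]

lemma exists_equivariant_of_fixed {G : Subgroup (Perm (Fin 4))} {v : Fin 3 → ℝ}
    (hv : v ∈ unitSphere) (hfix : ∀ σ ∈ G, τ σ *ᵥ v = v) :
    ∃ g : Matrix (Fin 3) (Fin 3) ℝ → (Fin 3 → ℝ),
      ContinuousOn g SO3 ∧ (∀ A ∈ SO3, g A ∈ unitSphere) ∧
      ∀ σ ∈ G, ∀ A ∈ SO3, g (A * iotaOf τ σ) = τ σ *ᵥ g A :=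
  ⟨fun _ => v, continuousOn_const, fun _ _ => hv, fun σ hσ _ _ => (hfix σ hσ).symm⟩

lemma exists_equivariant_of_le_stabilizer_pair (hτ : ∀ σ i, τ σ *ᵥ tetra i = tetra (σ i))
    {i j : Fin 4} (hij : i ≠ j) {G : Subgroup (Perm (Fin 4))}
    (hG : G ≤ MulAction.stabilizer (Perm (Fin 4)) ({i, j} : Finset (Fin 4))) :
    ∃ g : Matrix (Fin 3) (Fin 3) ℝ → (Fin 3 → ℝ),
      ContinuousOn g SO3 ∧ (∀ A ∈ SO3, g A ∈ unitSphere) ∧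
      ∀ σ ∈ G, ∀ A ∈ SO3, g (A * iotaOf τ σ) = τ σ *ᵥ g A :=
  exists_equivariant_of_fixed (tetra_pair_mem_unitSphere hij) fun _ hσ =>
    mulVec_smul_tetra_add_of_mem_stabilizer hτ hij (hG hσ) _

end Tetrahedral

theorem exists_equivariant_map_C2_D2_D3_general
    (τ : Equiv.Perm (Fin 4) → Matrix (Fin 3) (Fin 3) ℝ)
    (hτ : ∀ σ i, (τ σ).mulVec (tetra i) = tetra (σ i))
    (G : Subgroup (Equiv.Perm (Fin 4)))
    (hG : (∃ i j : Fin 4, i ≠ j ∧ G = Subgroup.closure {Equiv.swap i j}) ∨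
      (∃ i j k l : Fin 4, i ≠ j ∧ i ≠ k ∧ i ≠ l ∧ j ≠ k ∧ j ≠ l ∧ k ≠ l ∧
        G = Subgroup.closure {Equiv.swap i j, Equiv.swap k l}) ∨
      (∃ i : Fin 4, ∀ σ : Equiv.Perm (Fin 4), σ ∈ G ↔ σ i = i)) :
    ∃ g : Matrix (Fin 3) (Fin 3) ℝ → (Fin 3 → ℝ),
      ContinuousOn g SO3 ∧ (∀ A ∈ SO3, g A ∈ unitSphere) ∧
      ∀ σ ∈ G, ∀ A ∈ SO3, g (A * iotaOf τ σ) = (τ σ).mulVec (g A) := by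
  rcases hG with ⟨i, j, hij, rfl⟩ | ⟨i, j, k, l, hij, hik, hil, hjk, hjl, -, rfl⟩ | ⟨i, hG⟩
  · refine exists_equivariant_of_le_stabilizer_pair hτ hij ((Subgroup.closure_le _).2 ?_)
    exact Set.singleton_subset_iff.2 (swap_mem_stabilizer_pair i j)
  · refine exists_equivariant_of_le_stabilizer_pair hτ hij ((Subgroup.closure_le _).2 ?_)
    exact Set.insert_subset_iff.2 ⟨swap_mem_stabilizer_pair i j,
      Set.singleton_subset_iff.2 (swap_mem_stabilizer_pair_of_ne hik hil hjk hjl)⟩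
  · exact exists_equivariant_of_fixed (tetra_mem_unitSphere i) fun σ hσ => by
      rw [hτ, (hG σ).1 hσ]

/-- Let `G ⊆ S₄` be a subgroup generated by a single transposition `(i j)`,
or by two disjoint transpositions `(i j)` and `(k l)` (so `G ≅ C₂ × C₂`), or the stabilizer of
one letter `i` (so `G ≅ S₃`).  Then there exists a continuous `G`-equivariant map
`g : (SO(3), ρ_G) → (S², τ_G)`. -/
theorem exists_equivariant_map_C2_D2_D3
    (τ : Equiv.Perm (Fin 4) → Matrix (Fin 3) (Fin 3) ℝ)
    (hτorth : ∀ σ, τ σ * (τ σ).transpose = 1)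
    (hτ : ∀ σ i, (τ σ).mulVec (tetra i) = tetra (σ i))
    (G : Subgroup (Equiv.Perm (Fin 4)))
    (hG : (∃ i j : Fin 4, i ≠ j ∧ G = Subgroup.closure {Equiv.swap i j}) ∨
      (∃ i j k l : Fin 4, i ≠ j ∧ i ≠ k ∧ i ≠ l ∧ j ≠ k ∧ j ≠ l ∧ k ≠ l ∧
        G = Subgroup.closure {Equiv.swap i j, Equiv.swap k l}) ∨
      (∃ i : Fin 4, ∀ σ : Equiv.Perm (Fin 4), σ ∈ G ↔ σ i = i)) :
    ∃ g : Matrix (Fin 3) (Fin 3) ℝ → (Fin 3 → ℝ),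
      ContinuousOn g SO3 ∧ (∀ A ∈ SO3, g A ∈ unitSphere) ∧
      ∀ σ ∈ G, ∀ A ∈ SO3, g (A * iotaOf τ σ) = (τ σ).mulVec (g A) :=
  exists_equivariant_map_C2_D2_D3_general τ hτ G hG
end
end

section
/- Let G ⊂ S₄ be the cyclic subgroup of order 4 generated by a 4-cycle (i j k l). Then there exists a G-equivariant map from (SO(3), ρ_G) to (S², τ_G); that is, there is a continuous map g : SO(3) → S² satisfying g(A·ι(σ)) = τ(σ)(g(A)) for all σ ∈ G and all A ∈ SO(3). -/
noncomputable section

/-- The 4-cycle `(i j k l)` as a permutation, written as a product of transpositions. -/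
def fourCycle (i j k l : Fin 4) : Equiv.Perm (Fin 4) :=
  Equiv.swap i l * Equiv.swap i k * Equiv.swap i j

namespace C4Aux

open Matrix

abbrev Mat := Matrix (Fin 3) (Fin 3) ℝ

/-! ### The equivariant map, axis by axis -/

def gw1 (x11 x12 x21 x22 : ℝ) : ℝ :=
  (x11 + x22)/2 - (((x22 - x11)/2)^3 - 3*((x22 - x11)/2)*((x12 + x21)/2)^2)
def gw2 (x11 x12 x21 x22 : ℝ) : ℝ :=
  -((x21 - x12)/2) + (3*((x22 - x11)/2)^2*(-((x12 + x21)/2)) - (-((x12 + x21)/2))^3)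
def gd (x11 x12 x21 x22 x31 x32 : ℝ) : ℝ :=
  2*((-(x31/2))*((x22 - x11)/2) - (-(x32/2))*(-((x12 + x21)/2)))
def gn (p : ℝ) : ℝ := 1 - (1-p)/2 + ((1-p)/2)^3

def gZ (A : Mat) : Fin 3 → ℝ :=
  ![gw1 (A 0 0) (A 0 1) (A 1 0) (A 1 1) / gn (A 2 2),
    gw2 (A 0 0) (A 0 1) (A 1 0) (A 1 1) / gn (A 2 2),
    gd (A 0 0) (A 0 1) (A 1 0) (A 1 1) (A 2 0) (A 2 1) / gn (A 2 2)]

def gX (A : Mat) : Fin 3 → ℝ :=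
  ![gd (A 1 1) (A 1 2) (A 2 1) (A 2 2) (A 0 1) (A 0 2) / gn (A 0 0),
    gw1 (A 1 1) (A 1 2) (A 2 1) (A 2 2) / gn (A 0 0),
    gw2 (A 1 1) (A 1 2) (A 2 1) (A 2 2) / gn (A 0 0)]

def gY (A : Mat) : Fin 3 → ℝ :=
  ![gw2 (A 2 2) (A 2 0) (A 0 2) (A 0 0) / gn (A 1 1),
    gd (A 2 2) (A 2 0) (A 0 2) (A 0 0) (A 1 2) (A 1 0) / gn (A 1 1),
    gw1 (A 2 2) (A 2 0) (A 0 2) (A 0 0) / gn (A 1 1)]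

/-! ### Norm identity -/

lemma alg (P1 P2 Q1 Q2 S1 S2 m : ℝ)
    (hQ : Q1^2 + Q2^2 = m^2) (hP : P1^2 + P2^2 = (1-m)^2)
    (hS : S1^2 + S2^2 = m - m^2)
    (h4 : S1^2 - S2^2 = P1*Q1 + P2*Q2)
    (h5 : 2*(S1*S2) = P1*Q2 - P2*Q1) :
    (P1 - (Q1^3 - 3*Q1*Q2^2))^2 + (-P2 + (3*Q1^2*Q2 - Q2^3))^2
      + (2*(S1*Q1 - S2*Q2))^2 = (1 - m + m^3)^2 := by
  linear_combination hP + ((Q1^2+Q2^2)^2 + (Q1^2+Q2^2)*m^2 + m^4 + 2*(m - m^2))*hQ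
    + (2*(Q1^2+Q2^2))*hS + (2*(Q1^2 - Q2^2))*h4 + (-4*Q1*Q2)*h5

lemma core_norm (a b c d e f g h p : ℝ)
    (r3 : g^2+h^2+p^2 = 1)
    (c1 : a^2+d^2+g^2 = 1) (c2 : b^2+e^2+h^2 = 1)
    (c12 : a*b+d*e+g*h = 0) (cof : a*e - b*d = p) :
    (gw1 a b d e)^2 + (gw2 a b d e)^2 + (gd a b d e g h)^2 = (gn p)^2 := by
  have hQ : ((e-a)/2)^2 + (-((b+d)/2))^2 = ((1-p)/2)^2 := by
    linear_combination (c1+c2-r3-2*cof)/4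
  have hP : ((a+e)/2)^2 + ((d-b)/2)^2 = (1-(1-p)/2)^2 := by
    linear_combination (c1+c2-r3+2*cof)/4
  have hS : (-(g/2))^2 + (-(h/2))^2 = (1-p)/2 - ((1-p)/2)^2 := by
    linear_combination r3/4
  have h4 : (-(g/2))^2 - (-(h/2))^2 = ((a+e)/2)*((e-a)/2) + ((d-b)/2)*(-((b+d)/2)) := by
    linear_combination (c1-c2)/4
  have h5 : 2*((-(g/2))*(-(h/2))) = ((a+e)/2)*(-((b+d)/2)) - ((d-b)/2)*((e-a)/2) := by
    linear_combination c12/2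
  have key := alg ((a+e)/2) ((d-b)/2) ((e-a)/2) (-((b+d)/2)) (-(g/2)) (-(h/2)) ((1-p)/2)
    hQ hP hS h4 h5
  unfold gw1 gw2 gd gn
  linear_combination key

lemma gn_pos {p : ℝ} (h : p^2 ≤ 1) : 0 < gn p := by
  have h8 : 8 * gn p = (3-p)*(1+p)^2 + 2*(1-p)^2 := by unfold gn; ring
  nlinarith [sq_nonneg (1+p), sq_nonneg (1-p)]

/-! ### Basic facts about matrices in SO3 -/

lemma so3_entry_sq_le {A : Mat} (hA : A ∈ SO3) (i j : Fin 3) : (A i j)^2 ≤ 1 := by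
  obtain ⟨ho, -⟩ := hA
  have h1 := congrFun (congrFun ho i) i
  simp [Matrix.mul_apply, Matrix.transpose_apply, Fin.sum_univ_three, Matrix.one_apply] at h1
  have hsum : ∑ k : Fin 3, (A i k)^2 = 1 := by
    rw [Fin.sum_univ_three]; linear_combination h1
  calc (A i j)^2 ≤ ∑ k : Fin 3, (A i k)^2 :=
        Finset.single_le_sum (fun k _ => sq_nonneg (A i k)) (Finset.mem_univ j)
  _ = 1 := hsum

lemma so3_adjugate {A : Mat} (hA : A ∈ SO3) : A.adjugate = A.transpose := by
  obtain ⟨ho, hdet⟩ := hA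
  calc A.adjugate = A.adjugate * (A * A.transpose) := by rw [ho, mul_one]
  _ = (A.adjugate * A) * A.transpose := by rw [mul_assoc]
  _ = A.transpose := by rw [Matrix.adjugate_mul, hdet, one_smul, one_mul]


lemma norm_gZ {A : Mat} (hA : A ∈ SO3) : ∑ i0 : Fin 3, (gZ A i0)^2 = 1 := by
  obtain ⟨ho, hdet⟩ := hA
  have ht := mul_eq_one_comm.mp ho
  have r3 : (A 2 0)^2 + (A 2 1)^2 + (A 2 2)^2 = 1 := by
    have := congrFun (congrFun ho 2) 2
    simp [Matrix.mul_apply, Matrix.transpose_apply, Fin.sum_univ_three, Matrix.one_apply] at this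
    linear_combination this
  have c1 : (A 0 0)^2 + (A 1 0)^2 + (A 2 0)^2 = 1 := by
    have := congrFun (congrFun ht 0) 0
    simp [Matrix.mul_apply, Matrix.transpose_apply, Fin.sum_univ_three, Matrix.one_apply] at this
    linear_combination this
  have c2 : (A 0 1)^2 + (A 1 1)^2 + (A 2 1)^2 = 1 := by
    have := congrFun (congrFun ht 1) 1
    simp [Matrix.mul_apply, Matrix.transpose_apply, Fin.sum_univ_three, Matrix.one_apply] at this
    linear_combination this
  have c12 : (A 0 0)*(A 0 1) + (A 1 0)*(A 1 1) + (A 2 0)*(A 2 1) = 0 := by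
    have := congrFun (congrFun ht 0) 1
    simp [Matrix.mul_apply, Matrix.transpose_apply, Fin.sum_univ_three, Matrix.one_apply] at this
    linear_combination this
  have cof : (A 0 0)*(A 1 1) - (A 0 1)*(A 1 0) = A 2 2 := by
    have := congrFun (congrFun (so3_adjugate ⟨ho, hdet⟩) 2) 2
    simp [Matrix.adjugate_fin_three, Matrix.transpose_apply] at this
    linear_combination this
  have hp2 : (A 2 2)^2 ≤ 1 := so3_entry_sq_le ⟨ho, hdet⟩ _ _
  have hn : gn (A 2 2) ≠ 0 := (gn_pos hp2).ne'
  have key := core_norm (A 0 0) (A 0 1) (A 0 2) (A 1 0) (A 1 1) (A 1 2) (A 2 0) (A 2 1) (A 2 2) r3 c1 c2 c12 cof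
  simp only [gZ, Fin.sum_univ_three, Matrix.cons_val_zero, Matrix.cons_val_one,
    Matrix.head_cons, Matrix.cons_val_two, Matrix.tail_cons]
  rw [div_pow, div_pow, div_pow, ← add_div, ← add_div,
    div_eq_one_iff_eq (pow_ne_zero 2 hn)]
  linear_combination key

lemma cont_gZ : ContinuousOn gZ SO3 := by
  have hentry : ∀ i0 j0 : Fin 3, Continuous fun A : Mat => A i0 j0 := fun i0 j0 =>
    (continuous_apply j0).comp (continuous_apply i0)
  have hden : ∀ A ∈ SO3, gn (A 2 2) ≠ 0 := fun A hA =>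
    (gn_pos (so3_entry_sq_le hA _ _)).ne'
  refine continuousOn_pi.mpr fun i0 => ?_
  have hgn : Continuous fun A : Mat => gn (A 2 2) := by simp only [gn]; fun_prop
  fin_cases i0 <;>
    simp only [gZ, Matrix.cons_val_zero, Matrix.cons_val_one, Matrix.head_cons,
      Matrix.cons_val_two, Matrix.tail_cons] <;>
    refine ContinuousOn.div (Continuous.continuousOn (by simp only [gw1, gw2, gd]; fun_prop))
      hgn.continuousOn hden

lemma norm_gX {A : Mat} (hA : A ∈ SO3) : ∑ i0 : Fin 3, (gX A i0)^2 = 1 := by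
  obtain ⟨ho, hdet⟩ := hA
  have ht := mul_eq_one_comm.mp ho
  have r3 : (A 0 1)^2 + (A 0 2)^2 + (A 0 0)^2 = 1 := by
    have := congrFun (congrFun ho 0) 0
    simp [Matrix.mul_apply, Matrix.transpose_apply, Fin.sum_univ_three, Matrix.one_apply] at this
    linear_combination this
  have c1 : (A 1 1)^2 + (A 2 1)^2 + (A 0 1)^2 = 1 := by
    have := congrFun (congrFun ht 1) 1
    simp [Matrix.mul_apply, Matrix.transpose_apply, Fin.sum_univ_three, Matrix.one_apply] at this
    linear_combination this
  have c2 : (A 1 2)^2 + (A 2 2)^2 + (A 0 2)^2 = 1 := by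
    have := congrFun (congrFun ht 2) 2
    simp [Matrix.mul_apply, Matrix.transpose_apply, Fin.sum_univ_three, Matrix.one_apply] at this
    linear_combination this
  have c12 : (A 1 1)*(A 1 2) + (A 2 1)*(A 2 2) + (A 0 1)*(A 0 2) = 0 := by
    have := congrFun (congrFun ht 1) 2
    simp [Matrix.mul_apply, Matrix.transpose_apply, Fin.sum_univ_three, Matrix.one_apply] at this
    linear_combination this
  have cof : (A 1 1)*(A 2 2) - (A 1 2)*(A 2 1) = A 0 0 := by
    have := congrFun (congrFun (so3_adjugate ⟨ho, hdet⟩) 0) 0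
    simp [Matrix.adjugate_fin_three, Matrix.transpose_apply] at this
    linear_combination this
  have hp2 : (A 0 0)^2 ≤ 1 := so3_entry_sq_le ⟨ho, hdet⟩ _ _
  have hn : gn (A 0 0) ≠ 0 := (gn_pos hp2).ne'
  have key := core_norm (A 1 1) (A 1 2) (A 1 0) (A 2 1) (A 2 2) (A 2 0) (A 0 1) (A 0 2) (A 0 0) r3 c1 c2 c12 cof
  simp only [gX, Fin.sum_univ_three, Matrix.cons_val_zero, Matrix.cons_val_one,
    Matrix.head_cons, Matrix.cons_val_two, Matrix.tail_cons]
  rw [div_pow, div_pow, div_pow, ← add_div, ← add_div,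
    div_eq_one_iff_eq (pow_ne_zero 2 hn)]
  linear_combination key

lemma cont_gX : ContinuousOn gX SO3 := by
  have hentry : ∀ i0 j0 : Fin 3, Continuous fun A : Mat => A i0 j0 := fun i0 j0 =>
    (continuous_apply j0).comp (continuous_apply i0)
  have hden : ∀ A ∈ SO3, gn (A 0 0) ≠ 0 := fun A hA =>
    (gn_pos (so3_entry_sq_le hA _ _)).ne'
  refine continuousOn_pi.mpr fun i0 => ?_
  have hgn : Continuous fun A : Mat => gn (A 0 0) := by simp only [gn]; fun_prop
  fin_cases i0 <;>
    simp only [gX, Matrix.cons_val_zero, Matrix.cons_val_one, Matrix.head_cons,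
      Matrix.cons_val_two, Matrix.tail_cons] <;>
    refine ContinuousOn.div (Continuous.continuousOn (by simp only [gw1, gw2, gd]; fun_prop))
      hgn.continuousOn hden

lemma norm_gY {A : Mat} (hA : A ∈ SO3) : ∑ i0 : Fin 3, (gY A i0)^2 = 1 := by
  obtain ⟨ho, hdet⟩ := hA
  have ht := mul_eq_one_comm.mp ho
  have r3 : (A 1 2)^2 + (A 1 0)^2 + (A 1 1)^2 = 1 := by
    have := congrFun (congrFun ho 1) 1
    simp [Matrix.mul_apply, Matrix.transpose_apply, Fin.sum_univ_three, Matrix.one_apply] at this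
    linear_combination this
  have c1 : (A 2 2)^2 + (A 0 2)^2 + (A 1 2)^2 = 1 := by
    have := congrFun (congrFun ht 2) 2
    simp [Matrix.mul_apply, Matrix.transpose_apply, Fin.sum_univ_three, Matrix.one_apply] at this
    linear_combination this
  have c2 : (A 2 0)^2 + (A 0 0)^2 + (A 1 0)^2 = 1 := by
    have := congrFun (congrFun ht 0) 0
    simp [Matrix.mul_apply, Matrix.transpose_apply, Fin.sum_univ_three, Matrix.one_apply] at this
    linear_combination this
  have c12 : (A 2 2)*(A 2 0) + (A 0 2)*(A 0 0) + (A 1 2)*(A 1 0) = 0 := by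
    have := congrFun (congrFun ht 2) 0
    simp [Matrix.mul_apply, Matrix.transpose_apply, Fin.sum_univ_three, Matrix.one_apply] at this
    linear_combination this
  have cof : (A 2 2)*(A 0 0) - (A 2 0)*(A 0 2) = A 1 1 := by
    have := congrFun (congrFun (so3_adjugate ⟨ho, hdet⟩) 1) 1
    simp [Matrix.adjugate_fin_three, Matrix.transpose_apply] at this
    linear_combination this
  have hp2 : (A 1 1)^2 ≤ 1 := so3_entry_sq_le ⟨ho, hdet⟩ _ _
  have hn : gn (A 1 1) ≠ 0 := (gn_pos hp2).ne'
  have key := core_norm (A 2 2) (A 2 0) (A 2 1) (A 0 2) (A 0 0) (A 0 1) (A 1 2) (A 1 0) (A 1 1) r3 c1 c2 c12 cof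
  simp only [gY, Fin.sum_univ_three, Matrix.cons_val_zero, Matrix.cons_val_one,
    Matrix.head_cons, Matrix.cons_val_two, Matrix.tail_cons]
  rw [div_pow, div_pow, div_pow, ← add_div, ← add_div,
    div_eq_one_iff_eq (pow_ne_zero 2 hn)]
  linear_combination key

lemma cont_gY : ContinuousOn gY SO3 := by
  have hentry : ∀ i0 j0 : Fin 3, Continuous fun A : Mat => A i0 j0 := fun i0 j0 =>
    (continuous_apply j0).comp (continuous_apply i0)
  have hden : ∀ A ∈ SO3, gn (A 1 1) ≠ 0 := fun A hA =>
    (gn_pos (so3_entry_sq_le hA _ _)).ne'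
  refine continuousOn_pi.mpr fun i0 => ?_
  have hgn : Continuous fun A : Mat => gn (A 1 1) := by simp only [gn]; fun_prop
  fin_cases i0 <;>
    simp only [gY, Matrix.cons_val_zero, Matrix.cons_val_one, Matrix.head_cons,
      Matrix.cons_val_two, Matrix.tail_cons] <;>
    refine ContinuousOn.div (Continuous.continuousOn (by simp only [gw1, gw2, gd]; fun_prop))
      hgn.continuousOn hden

def M1 : Mat := !![0, 0, 1; 0, -1, 0; -1, 0, 0]

def M2 : Mat := !![0, 1, 0; -1, 0, 0; 0, 0, -1]

def M3 : Mat := !![-1, 0, 0; 0, 0, 1; 0, -1, 0]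

def M4 : Mat := !![0, -1, 0; 1, 0, 0; 0, 0, -1]

def M5 : Mat := !![-1, 0, 0; 0, 0, -1; 0, 1, 0]

def M6 : Mat := !![0, 0, -1; 0, -1, 0; 1, 0, 0]

lemma base1 : ∀ A : Mat, gY (A * (-M1)) = M1 *ᵥ (gY A) := by
  have hneg : -M1 = (!![0, 0, -1; 0, 1, 0; 1, 0, 0] : Mat) := by
    ext i0 j0
    fin_cases i0 <;> fin_cases j0 <;> simp [M1, Matrix.vecHead, Matrix.vecTail]
  intro A
  rw [hneg]
  funext i0
  fin_cases i0 <;>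
  · simp [gY, M1, gw1, gw2, gd, gn, Matrix.mul_apply, Matrix.mulVec, dotProduct,
      Fin.sum_univ_three, Matrix.vecHead, Matrix.vecTail]
    ring

lemma base2 : ∀ A : Mat, gZ (A * (-M2)) = M2 *ᵥ (gZ A) := by
  have hneg : -M2 = (!![0, -1, 0; 1, 0, 0; 0, 0, 1] : Mat) := by
    ext i0 j0
    fin_cases i0 <;> fin_cases j0 <;> simp [M2, Matrix.vecHead, Matrix.vecTail]
  intro A
  rw [hneg]
  funext i0
  fin_cases i0 <;>
  · simp [gZ, M2, gw1, gw2, gd, gn, Matrix.mul_apply, Matrix.mulVec, dotProduct,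
      Fin.sum_univ_three, Matrix.vecHead, Matrix.vecTail]
    ring

lemma base3 : ∀ A : Mat, gX (A * (-M3)) = M3 *ᵥ (gX A) := by
  have hneg : -M3 = (!![1, 0, 0; 0, 0, -1; 0, 1, 0] : Mat) := by
    ext i0 j0
    fin_cases i0 <;> fin_cases j0 <;> simp [M3, Matrix.vecHead, Matrix.vecTail]
  intro A
  rw [hneg]
  funext i0
  fin_cases i0 <;>
  · simp [gX, M3, gw1, gw2, gd, gn, Matrix.mul_apply, Matrix.mulVec, dotProduct,
      Fin.sum_univ_three, Matrix.vecHead, Matrix.vecTail]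
    ring

lemma base4 : ∀ A : Mat, gZ (A * (-M4)) = M4 *ᵥ (gZ A) := by
  have hneg : -M4 = (!![0, 1, 0; -1, 0, 0; 0, 0, 1] : Mat) := by
    ext i0 j0
    fin_cases i0 <;> fin_cases j0 <;> simp [M4, Matrix.vecHead, Matrix.vecTail]
  intro A
  rw [hneg]
  funext i0
  fin_cases i0 <;>
  · simp [gZ, M4, gw1, gw2, gd, gn, Matrix.mul_apply, Matrix.mulVec, dotProduct,
      Fin.sum_univ_three, Matrix.vecHead, Matrix.vecTail]
    ring

lemma base5 : ∀ A : Mat, gX (A * (-M5)) = M5 *ᵥ (gX A) := by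
  have hneg : -M5 = (!![1, 0, 0; 0, 0, 1; 0, -1, 0] : Mat) := by
    ext i0 j0
    fin_cases i0 <;> fin_cases j0 <;> simp [M5, Matrix.vecHead, Matrix.vecTail]
  intro A
  rw [hneg]
  funext i0
  fin_cases i0 <;>
  · simp [gX, M5, gw1, gw2, gd, gn, Matrix.mul_apply, Matrix.mulVec, dotProduct,
      Fin.sum_univ_three, Matrix.vecHead, Matrix.vecTail]
    ring

lemma base6 : ∀ A : Mat, gY (A * (-M6)) = M6 *ᵥ (gY A) := by
  have hneg : -M6 = (!![0, 0, 1; 0, 1, 0; -1, 0, 0] : Mat) := by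
    ext i0 j0
    fin_cases i0 <;> fin_cases j0 <;> simp [M6, Matrix.vecHead, Matrix.vecTail]
  intro A
  rw [hneg]
  funext i0
  fin_cases i0 <;>
  · simp [gY, M6, gw1, gw2, gd, gn, Matrix.mul_apply, Matrix.mulVec, dotProduct,
      Fin.sum_univ_three, Matrix.vecHead, Matrix.vecTail]
    ring

/-! ### tetra uniqueness and τ computation -/

def tvec : Fin 4 → Fin 3 → ℝ := ![![1,1,1], ![1,-1,-1], ![-1,1,-1], ![-1,-1,1]]

lemma tetra_eq (n : Fin 4) : tetra n = (Real.sqrt 3)⁻¹ • tvec n := rfl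

lemma mat_eq_of_tetra (M N : Mat) (hMN : ∀ n, M *ᵥ tetra n = N *ᵥ tetra n) : M = N := by
  have hs : (Real.sqrt 3)⁻¹ ≠ 0 := by
    refine inv_ne_zero (ne_of_gt (Real.sqrt_pos.mpr (by norm_num)))
  have h' : ∀ n : Fin 4, M *ᵥ tvec n = N *ᵥ tvec n := by
    intro n
    have h0 := hMN n
    rw [tetra_eq, Matrix.mulVec_smul, Matrix.mulVec_smul] at h0
    exact smul_right_injective _ hs h0
  have e : ∀ (n : Fin 4) (i0 : Fin 3), (M *ᵥ tvec n) i0 = (N *ᵥ tvec n) i0 :=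
    fun n i0 => congrFun (h' n) i0
  ext i0 j0
  have e0 := e 0 i0
  have e1 := e 1 i0
  have e2 := e 2 i0
  have e3 := e 3 i0
  simp [tvec, Matrix.mulVec, dotProduct, Fin.sum_univ_three,
    Matrix.vecHead, Matrix.vecTail] at e0 e1 e2 e3
  fin_cases j0
  · show M i0 0 = N i0 0
    linarith
  · show M i0 1 = N i0 1
    linarith
  · show M i0 2 = N i0 2
    linarith

/-! ### The main reduction -/

lemma main_case (τ : Equiv.Perm (Fin 4) → Mat)
    (hτ : ∀ σ n, (τ σ) *ᵥ (tetra n) = tetra (σ n))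
    (c : Equiv.Perm (Fin 4)) (Mc : Mat)
    (hMc : τ c = Mc) (hsgn : Equiv.Perm.sign c = -1)
    (g : Mat → (Fin 3 → ℝ))
    (hcont : ContinuousOn g SO3)
    (hnorm : ∀ A ∈ SO3, ∑ i0 : Fin 3, (g A i0)^2 = 1)
    (hbase : ∀ A : Mat, g (A * (-Mc)) = Mc *ᵥ (g A)) :
    ∃ g : Mat → (Fin 3 → ℝ),
      ContinuousOn g SO3 ∧ (∀ A ∈ SO3, g A ∈ unitSphere) ∧
      ∀ σ ∈ Subgroup.closure {c}, ∀ A ∈ SO3, g (A * iotaOf τ σ) = (τ σ) *ᵥ (g A) := by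
  have tau_mul : ∀ σ σ' : Equiv.Perm (Fin 4), τ (σ * σ') = τ σ * τ σ' := by
    intro σ σ'
    refine mat_eq_of_tetra _ _ fun n => ?_
    rw [hτ, ← Matrix.mulVec_mulVec, hτ, hτ, Equiv.Perm.mul_apply]
  have tau_one : τ 1 = 1 := by
    refine mat_eq_of_tetra _ _ fun n => ?_
    rw [hτ, Matrix.one_mulVec, Equiv.Perm.one_apply]
  have iota_mul : ∀ σ σ' : Equiv.Perm (Fin 4),
      iotaOf τ (σ * σ') = iotaOf τ σ * iotaOf τ σ' := by
    intro σ σ'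
    unfold iotaOf
    rw [_root_.map_mul]
    rcases Int.units_eq_one_or (Equiv.Perm.sign σ) with h1 | h1 <;>
      rcases Int.units_eq_one_or (Equiv.Perm.sign σ') with h2 | h2 <;>
        simp [h1, h2, tau_mul σ σ', mul_neg, neg_mul, neg_neg]
  have iota_one : iotaOf τ 1 = 1 := by
    unfold iotaOf
    simp [tau_one]
  refine ⟨g, hcont, hnorm, ?_⟩
  have key : ∀ σ ∈ Subgroup.closure {c}, ∀ A : Mat,
      g (A * iotaOf τ σ) = (τ σ) *ᵥ (g A) := by
    intro σ hσ
    induction hσ using Subgroup.closure_induction with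
    | mem x hx =>
      intro A
      rcases Set.mem_singleton_iff.mp hx with rfl
      rw [show iotaOf τ x = -(τ x) by unfold iotaOf; rw [if_neg (by rw [hsgn]; decide)]]
      rw [hMc]
      exact hbase A
    | one =>
      intro A
      rw [iota_one, tau_one, mul_one, Matrix.one_mulVec]
    | mul x y hx hy ihx ihy =>
      intro A
      have hcomm : y * x = x * y := by
        obtain ⟨m, rfl⟩ := Subgroup.mem_closure_singleton.mp hx
        obtain ⟨nn, rfl⟩ := Subgroup.mem_closure_singleton.mp hy
        exact zpow_mul_comm c nn m
      calc g (A * iotaOf τ (x * y)) = g ((A * iotaOf τ x) * iotaOf τ y) := by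
            rw [iota_mul, mul_assoc]
      _ = (τ y) *ᵥ (g (A * iotaOf τ x)) := ihy _
      _ = (τ y) *ᵥ ((τ x) *ᵥ (g A)) := by rw [ihx]
      _ = (τ y * τ x) *ᵥ (g A) := Matrix.mulVec_mulVec _ _ _
      _ = (τ (y * x)) *ᵥ (g A) := by rw [tau_mul]
      _ = (τ (x * y)) *ᵥ (g A) := by rw [hcomm]
    | inv x hx ih =>
      intro A
      have h1 : iotaOf τ x⁻¹ * iotaOf τ x = 1 := by
        rw [← iota_mul, inv_mul_cancel, iota_one]
      have h2 : τ x⁻¹ * τ x = 1 := by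
        rw [← tau_mul, inv_mul_cancel, tau_one]
      have h3 := ih (A * iotaOf τ x⁻¹)
      rw [mul_assoc, h1, mul_one] at h3
      rw [h3, Matrix.mulVec_mulVec, h2, Matrix.one_mulVec]
  intro σ hσ A _
  exact key σ hσ A

end C4Aux

/-- Let `G ⊆ S₄` be the cyclic subgroup of order 4 generated by a 4-cycle
`(i j k l)`.  Then there exists a continuous `G`-equivariant map
`g : (SO(3), ρ_G) → (S², τ_G)`. -/
theorem exists_equivariant_map_C4
    (τ : Equiv.Perm (Fin 4) → Matrix (Fin 3) (Fin 3) ℝ)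
    (hτorth : ∀ σ, τ σ * (τ σ).transpose = 1)
    (hτ : ∀ σ i, (τ σ).mulVec (tetra i) = tetra (σ i))
    (i j k l : Fin 4)
    (hdist : i ≠ j ∧ i ≠ k ∧ i ≠ l ∧ j ≠ k ∧ j ≠ l ∧ k ≠ l)
    (G : Subgroup (Equiv.Perm (Fin 4)))
    (hG : G = Subgroup.closure {fourCycle i j k l}) :
    ∃ g : Matrix (Fin 3) (Fin 3) ℝ → (Fin 3 → ℝ),
      ContinuousOn g SO3 ∧ (∀ A ∈ SO3, g A ∈ unitSphere) ∧
      ∀ σ ∈ G, ∀ A ∈ SO3, g (A * iotaOf τ σ) = (τ σ).mulVec (g A) := by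
  obtain ⟨d1, d2, d3, d4, d5, d6⟩ := hdist
  subst hG
  have hsix : ∀ (a b c' e : Fin 4), a ≠ b → a ≠ c' → a ≠ e → b ≠ c' → b ≠ e → c' ≠ e →
      (fourCycle a b c' e = fourCycle 0 1 2 3 ∨ fourCycle a b c' e = fourCycle 0 1 3 2 ∨
       fourCycle a b c' e = fourCycle 0 2 1 3 ∨ fourCycle a b c' e = fourCycle 0 2 3 1 ∨
       fourCycle a b c' e = fourCycle 0 3 1 2 ∨ fourCycle a b c' e = fourCycle 0 3 2 1) := by
    decide
  rcases hsix i j k l d1 d2 d3 d4 d5 d6 with h | h | h | h | h | h <;> rw [h]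
  case _ =>
    have hM : τ (fourCycle 0 1 2 3) = C4Aux.M1 := by
      apply C4Aux.mat_eq_of_tetra
      intro n
      rw [hτ]
      simp only [C4Aux.tetra_eq, Matrix.mulVec_smul]
      congr 1
      fin_cases n <;>
      · funext i0
        fin_cases i0 <;>
          simp [C4Aux.tvec, C4Aux.M1, fourCycle, Equiv.Perm.mul_apply, Equiv.swap_apply_def,
            Matrix.mulVec, dotProduct, Fin.sum_univ_three, Matrix.vecHead,
            Matrix.vecTail] <;>
          norm_num
    exact C4Aux.main_case τ hτ _ C4Aux.M1 hM (by decide) C4Aux.gY C4Aux.cont_gY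
      (fun A hA => C4Aux.norm_gY hA) (fun A => C4Aux.base1 A)
  case _ =>
    have hM : τ (fourCycle 0 1 3 2) = C4Aux.M2 := by
      apply C4Aux.mat_eq_of_tetra
      intro n
      rw [hτ]
      simp only [C4Aux.tetra_eq, Matrix.mulVec_smul]
      congr 1
      fin_cases n <;>
      · funext i0
        fin_cases i0 <;>
          simp [C4Aux.tvec, C4Aux.M2, fourCycle, Equiv.Perm.mul_apply, Equiv.swap_apply_def,
            Matrix.mulVec, dotProduct, Fin.sum_univ_three, Matrix.vecHead,
            Matrix.vecTail] <;>
          norm_num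
    exact C4Aux.main_case τ hτ _ C4Aux.M2 hM (by decide) C4Aux.gZ C4Aux.cont_gZ
      (fun A hA => C4Aux.norm_gZ hA) (fun A => C4Aux.base2 A)
  case _ =>
    have hM : τ (fourCycle 0 2 1 3) = C4Aux.M3 := by
      apply C4Aux.mat_eq_of_tetra
      intro n
      rw [hτ]
      simp only [C4Aux.tetra_eq, Matrix.mulVec_smul]
      congr 1
      fin_cases n <;>
      · funext i0
        fin_cases i0 <;>
          simp [C4Aux.tvec, C4Aux.M3, fourCycle, Equiv.Perm.mul_apply, Equiv.swap_apply_def,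
            Matrix.mulVec, dotProduct, Fin.sum_univ_three, Matrix.vecHead,
            Matrix.vecTail] <;>
          norm_num
    exact C4Aux.main_case τ hτ _ C4Aux.M3 hM (by decide) C4Aux.gX C4Aux.cont_gX
      (fun A hA => C4Aux.norm_gX hA) (fun A => C4Aux.base3 A)
  case _ =>
    have hM : τ (fourCycle 0 2 3 1) = C4Aux.M4 := by
      apply C4Aux.mat_eq_of_tetra
      intro n
      rw [hτ]
      simp only [C4Aux.tetra_eq, Matrix.mulVec_smul]
      congr 1
      fin_cases n <;>
      · funext i0
        fin_cases i0 <;>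
          simp [C4Aux.tvec, C4Aux.M4, fourCycle, Equiv.Perm.mul_apply, Equiv.swap_apply_def,
            Matrix.mulVec, dotProduct, Fin.sum_univ_three, Matrix.vecHead,
            Matrix.vecTail] <;>
          norm_num
    exact C4Aux.main_case τ hτ _ C4Aux.M4 hM (by decide) C4Aux.gZ C4Aux.cont_gZ
      (fun A hA => C4Aux.norm_gZ hA) (fun A => C4Aux.base4 A)
  case _ =>
    have hM : τ (fourCycle 0 3 1 2) = C4Aux.M5 := by
      apply C4Aux.mat_eq_of_tetra
      intro n
      rw [hτ]
      simp only [C4Aux.tetra_eq, Matrix.mulVec_smul]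
      congr 1
      fin_cases n <;>
      · funext i0
        fin_cases i0 <;>
          simp [C4Aux.tvec, C4Aux.M5, fourCycle, Equiv.Perm.mul_apply, Equiv.swap_apply_def,
            Matrix.mulVec, dotProduct, Fin.sum_univ_three, Matrix.vecHead,
            Matrix.vecTail] <;>
          norm_num
    exact C4Aux.main_case τ hτ _ C4Aux.M5 hM (by decide) C4Aux.gX C4Aux.cont_gX
      (fun A hA => C4Aux.norm_gX hA) (fun A => C4Aux.base5 A)
  case _ =>
    have hM : τ (fourCycle 0 3 2 1) = C4Aux.M6 := by
      apply C4Aux.mat_eq_of_tetra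
      intro n
      rw [hτ]
      simp only [C4Aux.tetra_eq, Matrix.mulVec_smul]
      congr 1
      fin_cases n <;>
      · funext i0
        fin_cases i0 <;>
          simp [C4Aux.tvec, C4Aux.M6, fourCycle, Equiv.Perm.mul_apply, Equiv.swap_apply_def,
            Matrix.mulVec, dotProduct, Fin.sum_univ_three, Matrix.vecHead,
            Matrix.vecTail] <;>
          norm_num
    exact C4Aux.main_case τ hτ _ C4Aux.M6 hM (by decide) C4Aux.gY C4Aux.cont_gY
      (fun A hA => C4Aux.norm_gY hA) (fun A => C4Aux.base6 A)
end
end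

section
/- There exists an ellipsoid E ⊂ ℝ³ centred at the origin whose three axis lengths are pairwise different, such that the boundary ∂E contains all six points of the set V = {(x,y,z) ∈ ℝ³ : x, y, z ∈ {−1, 1} and x + y + z ∈ {−1, 1}}, but ∂E does not contain the point (1,1,1). (This disproves the lemma of Eggleston asserting that any ellipsoid with pairwise different axis lengths whose boundary contains V must have centre 0, axes parallel to the coordinate axes, and boundary containing (±1, ±1, ±1).) -/
noncomputable section

/-- The value of the quadratic form with matrix `Q` at `y`. -/
def qform3 (Q : Matrix (Fin 3) (Fin 3) ℝ) (y : Fin 3 → ℝ) : ℝ :=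
  ∑ i, y i * Q.mulVec y i

/-- The six points `(x, y, z)` with `x, y, z ∈ {−1, 1}` and `x + y + z ∈ {−1, 1}`;
they are the vertices of an octahedron. -/
def eggV : Set (Fin 3 → ℝ) :=
  {x | (∀ k, x k = 1 ∨ x k = -1) ∧ ((∑ k, x k) = 1 ∨ (∑ k, x k) = -1)}

/-- The counterexample matrix `(1/6) · [[4,1,1],[1,2,1],[1,1,2]]`. -/
def eggQ : Matrix (Fin 3) (Fin 3) ℝ :=
  !![4/6, 1/6, 1/6; 1/6, 2/6, 1/6; 1/6, 1/6, 2/6]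

lemma eggQ_qform (p : Fin 3 → ℝ) :
    qform3 eggQ p = (4*(p 0)^2 + 2*(p 1)^2 + 2*(p 2)^2
      + 2*(p 0)*(p 1) + 2*(p 0)*(p 2) + 2*(p 1)*(p 2)) / 6 := by
  simp [qform3, eggQ, Matrix.mulVec, dotProduct, Fin.sum_univ_three,
    Matrix.vecHead, Matrix.vecTail]
  ring

/-- **counterexample to Eggleston's lemma.** There is an ellipsoid centred at
the origin — given by a positive definite symmetric matrix `Q` having three distinct
eigenvalues, i.e. with pairwise different axis lengths — whose boundary `{x | q(x) = 1}`
contains all six points of `eggV` but does not contain `(1,1,1)`. -/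
theorem eggleston_counterexample :
    ∃ Q : Matrix (Fin 3) (Fin 3) ℝ,
      Q.transpose = Q ∧
      (∀ x : Fin 3 → ℝ, x ≠ 0 → 0 < qform3 Q x) ∧
      (∃ μ : Fin 3 → ℝ, Function.Injective μ ∧
        ∀ i, ∃ w : Fin 3 → ℝ, w ≠ 0 ∧ Q.mulVec w = μ i • w) ∧
      (∀ p ∈ eggV, qform3 Q p = 1) ∧
      qform3 Q (fun _ => 1) ≠ 1 := by
  refine ⟨eggQ, ?_, ?_, ?_, ?_, ?_⟩
  · -- symmetric
    ext i j
    fin_cases i <;> fin_cases j <;> rfl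
  · -- positive definite
    intro x hx
    obtain ⟨i, hi⟩ := Function.ne_iff.mp hx
    simp only [Pi.zero_apply] at hi
    have h0 : (0:ℝ) < x i ^ 2 :=
      (sq_nonneg _).lt_of_ne (by simpa using (pow_ne_zero 2 hi).symm)
    have key : (0:ℝ) < x 0 ^ 2 + x 1 ^ 2 + x 2 ^ 2 := by
      fin_cases i <;> simp at h0 <;>
        nlinarith [sq_nonneg (x 0), sq_nonneg (x 1), sq_nonneg (x 2)]
    rw [eggQ_qform]
    nlinarith [sq_nonneg (x 0 + x 1 + x 2), sq_nonneg (x 0), key]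
  · -- three distinct eigenvalues
    refine ⟨![1/6, 1/3, 5/6], ?_, ?_⟩
    · intro i j hij
      fin_cases i <;> fin_cases j <;> simp_all <;> norm_num at hij
    · intro i
      fin_cases i
      · refine ⟨![0, -1, 1], ?_, ?_⟩
        · intro h
          have := congrFun h 1
          norm_num at this
        · funext k
          fin_cases k <;>
            simp [eggQ, Matrix.mulVec, dotProduct, Fin.sum_univ_three,
              Matrix.vecHead, Matrix.vecTail] <;> norm_num
      · refine ⟨![-1, 1, 1], ?_, ?_⟩
        · intro h
          have := congrFun h 1
          norm_num at this
        · funext k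
          fin_cases k <;>
            simp [eggQ, Matrix.mulVec, dotProduct, Fin.sum_univ_three,
              Matrix.vecHead, Matrix.vecTail] <;> norm_num
      · refine ⟨![2, 1, 1], ?_, ?_⟩
        · intro h
          have := congrFun h 1
          norm_num at this
        · funext k
          fin_cases k <;>
            simp [eggQ, Matrix.mulVec, dotProduct, Fin.sum_univ_three,
              Matrix.vecHead, Matrix.vecTail] <;> norm_num
  · -- all six points lie on the boundary
    rintro p ⟨h1, h2⟩
    rw [Fin.sum_univ_three] at h2
    rw [eggQ_qform]
    rcases h1 0 with ha | ha <;> rcases h1 1 with hb | hb <;> rcases h1 2 with hc | hc <;>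
      rw [ha, hb, hc] at h2 ⊢ <;> norm_num at h2 <;> norm_num
  · -- (1,1,1) is not on the boundary
    rw [eggQ_qform]
    norm_num
end
end
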